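/- arXiv:1406.1405 — 7 statements merged into one kernel-verified Lean document; each statement's English description precedes it below -/
import Mathlib

section
/- Every nonempty open subset of the space κ^ω (the countable product of a discrete space of infinite cardinality κ) is homeomorphic to κ^ω. -/
open Set

namespace Stmt0Aux

variable {α : Type*}

/-- The cylinder of a finite list: all sequences extending it. -/
def Cyl (t : List α) : Set (ℕ → α) := {f | ∀ i : Fin t.length, f i = t.get i}

/-- The length-`n` prefix of a sequence, as a list. -/
def pre (f : ℕ → α) (n : ℕ) : List α := List.ofFn fun i : Fin n => f i

@[simp] lemma length_pre (f : ℕ → α) (n : ℕ) : (pre f n).length = n := by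
  simp [pre]

lemma get_pre (f : ℕ → α) (n : ℕ) (i : Fin (pre f n).length) :
    (pre f n).get i = f i := by
  obtain ⟨k, hk⟩ := i
  simp [pre]

lemma mem_cyl_pre (f : ℕ → α) (n : ℕ) : f ∈ Cyl (pre f n) := fun i => (get_pre f n i).symm

lemma pre_take (f : ℕ → α) {k n : ℕ} (h : k ≤ n) : (pre f n).take k = pre f k := by
  apply List.ext_get
  · simp [h]
  · intro m h1 h2
    simp only [List.get_eq_getElem, List.getElem_take, pre, List.getElem_ofFn]

lemma pre_eq_of_mem_cyl {t : List α} {f : ℕ → α} (hf : f ∈ Cyl t) :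
    pre f t.length = t := by
  apply List.ext_get (by simp)
  intro m h1 h2
  rw [get_pre]
  exact hf ⟨m, h2⟩

lemma isOpen_cyl [TopologicalSpace α] [DiscreteTopology α] (t : List α) : IsOpen (Cyl t) := by
  have : Cyl t = ⋂ i : Fin t.length, (fun f : ℕ → α => f i) ⁻¹' {t.get i} := by
    ext f; simp [Cyl]
  rw [this]
  exact isOpen_iInter_of_finite fun i =>
    (continuous_apply (i : ℕ)).isOpen_preimage _ (isOpen_discrete _)

variable [TopologicalSpace α] [DiscreteTopology α] {U : Set (ℕ → α)}

lemma exists_cyl_pre_subset (hU : IsOpen U) {f : ℕ → α} (hf : f ∈ U) :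
    ∃ n, Cyl (pre f n) ⊆ U := by
  classical
  obtain ⟨I, u, h1, h2⟩ := isOpen_pi_iff.mp hU f hf
  refine ⟨(I.sup id) + 1, fun g hg => h2 ?_⟩
  intro i hi
  have hil : i < (pre f ((I.sup id) + 1)).length := by
    simp only [length_pre]
    exact Nat.lt_succ_of_le (Finset.le_sup (f := id) hi)
  have : g i = f i := by
    have := hg ⟨i, hil⟩
    rwa [get_pre] at this
  rw [this]
  exact (h1 i hi).2

/-- The set of minimal lists whose cylinders are contained in `U`. -/
def Sset (U : Set (ℕ → α)) : Set (List α) :=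
  {t | Cyl t ⊆ U ∧ ∀ k < t.length, ¬ Cyl (t.take k) ⊆ U}

noncomputable def nOf (hU : IsOpen U) (f : ℕ → α) (hf : f ∈ U) : ℕ :=
  @Nat.find _ (Classical.decPred _) (exists_cyl_pre_subset hU hf)

noncomputable def tOf (hU : IsOpen U) (f : ℕ → α) (hf : f ∈ U) : List α :=
  pre f (nOf hU f hf)

lemma tOf_spec (hU : IsOpen U) (f : ℕ → α) (hf : f ∈ U) : Cyl (tOf hU f hf) ⊆ U :=
  @Nat.find_spec _ (Classical.decPred _) (exists_cyl_pre_subset hU hf)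

lemma mem_cyl_tOf (hU : IsOpen U) (f : ℕ → α) (hf : f ∈ U) : f ∈ Cyl (tOf hU f hf) :=
  mem_cyl_pre f _

lemma tOf_mem_Sset (hU : IsOpen U) (f : ℕ → α) (hf : f ∈ U) : tOf hU f hf ∈ Sset U := by
  refine ⟨tOf_spec hU f hf, fun k hk hsub => ?_⟩
  simp only [tOf, length_pre] at hk
  rw [tOf, pre_take f hk.le] at hsub
  exact @Nat.find_min _ (Classical.decPred _) (exists_cyl_pre_subset hU hf) _ hk hsub

lemma tOf_eq (hU : IsOpen U) {t : List α} (ht : t ∈ Sset U) {f : ℕ → α}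
    (hf' : f ∈ Cyl t) (hf : f ∈ U) : tOf hU f hf = t := by
  have hpre : pre f t.length = t := pre_eq_of_mem_cyl hf'
  have h1 : nOf hU f hf ≤ t.length :=
    @Nat.find_le _ _ (Classical.decPred _) (exists_cyl_pre_subset hU hf)
      (by rw [hpre]; exact ht.1)
  have h2 : ¬ nOf hU f hf < t.length := by
    intro h
    refine ht.2 _ h ?_
    rw [← hpre, pre_take f h.le]
    exact tOf_spec hU f hf
  have : nOf hU f hf = t.length := le_antisymm h1 (not_lt.mp h2)
  rw [tOf, this, hpre]

/-- The equivalence between the disjoint union of the minimal cylinders and `U`. -/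
noncomputable def sigmaEquiv (hU : IsOpen U) :
    (Σ t : Sset U, Cyl (t : List α)) ≃ U where
  toFun p := ⟨p.2.1, p.1.2.1 p.2.2⟩
  invFun u := ⟨⟨tOf hU u.1 u.2, tOf_mem_Sset hU u.1 u.2⟩, ⟨u.1, mem_cyl_tOf hU u.1 u.2⟩⟩
  left_inv := by
    rintro ⟨⟨t, ht⟩, ⟨f, hf⟩⟩
    dsimp only
    have h : ∀ hf2 : f ∈ U, tOf hU f hf2 = t := fun hf2 => tOf_eq hU ht hf hf2
    refine Sigma.ext (Subtype.ext (h _)) ?_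
    rw [Subtype.heq_iff_coe_eq (fun x => by dsimp only; rw [h])]
  right_inv u := Subtype.ext rfl

lemma continuous_sigmaEquiv (hU : IsOpen U) : Continuous (sigmaEquiv hU) := by
  apply continuous_sigma
  intro t
  exact Continuous.subtype_mk continuous_subtype_val _

lemma isOpenMap_sigmaEquiv (hU : IsOpen U) : IsOpenMap (sigmaEquiv hU) := by
  rw [isOpenMap_sigma]
  intro t
  intro W hW
  have hval : IsOpen (Subtype.val '' W) := (isOpen_cyl (t : List α)).isOpenMap_subtype_val W hW
  have himg : (fun a : Cyl (t : List α) => sigmaEquiv hU ⟨t, a⟩) '' W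
      = (Subtype.val : U → (ℕ → α)) ⁻¹' (Subtype.val '' W) := by
    ext u
    constructor
    · rintro ⟨w, hw, rfl⟩
      exact ⟨w, hw, rfl⟩
    · rintro ⟨w, hw, hwu⟩
      exact ⟨w, hw, Subtype.ext hwu⟩
  rw [himg]
  exact hval.preimage continuous_subtype_val

/-- `U` is homeomorphic to the disjoint union of the minimal cylinders. -/
noncomputable def sigmaHomeo (hU : IsOpen U) :
    (Σ t : Sset U, Cyl (t : List α)) ≃ₜ U :=
  Equiv.toHomeomorphOfContinuousOpen (sigmaEquiv hU)
    (continuous_sigmaEquiv hU) (isOpenMap_sigmaEquiv hU)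

/-- Each cylinder is homeomorphic to the whole space. -/
def cylHomeo (t : List α) : Cyl t ≃ₜ (ℕ → α) where
  toFun f n := f.1 (n + t.length)
  invFun g := ⟨fun n => if h : n < t.length then t.get ⟨n, h⟩ else g (n - t.length),
    fun i => by simp [i.2]⟩
  left_inv := by
    rintro ⟨f, hf⟩
    apply Subtype.ext
    funext n
    by_cases h : n < t.length
    · simpa [h] using (hf ⟨n, h⟩).symm
    · simp only [dif_neg h]
      rw [Nat.sub_add_cancel (not_lt.mp h)]
  right_inv g := by
    funext n
    simp
  continuous_toFun :=
    continuous_pi fun n => (continuous_apply (n + t.length)).comp continuous_subtype_val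
  continuous_invFun := by
    apply Continuous.subtype_mk
    apply continuous_pi
    intro n
    by_cases h : n < t.length
    · simp only [dif_pos h]; exact continuous_const
    · simp only [dif_neg h]; exact continuous_apply _

/-- A sigma congruence homeomorphism. -/
def sigmaCongrHomeo {ι : Type*} {X Y : ι → Type*} [∀ i, TopologicalSpace (X i)]
    [∀ i, TopologicalSpace (Y i)] (h : ∀ i, X i ≃ₜ Y i) :
    (Σ i, X i) ≃ₜ (Σ i, Y i) where
  toEquiv := Equiv.sigmaCongrRight fun i => (h i).toEquiv
  continuous_toFun := continuous_sigma fun i => continuous_sigmaMk.comp (h i).continuous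
  continuous_invFun := continuous_sigma fun i => continuous_sigmaMk.comp (h i).symm.continuous

/-- "cons" homeomorphism. -/
def consHomeo : α × (ℕ → α) ≃ₜ (ℕ → α) where
  toFun p n := Nat.casesOn n p.1 fun m => p.2 m
  invFun g := (g 0, fun m => g (m + 1))
  left_inv p := rfl
  right_inv g := by funext n; cases n <;> rfl
  continuous_toFun := by
    apply continuous_pi
    intro n
    cases n with
    | zero => exact continuous_fst
    | succ m => exact (continuous_apply m).comp continuous_snd
  continuous_invFun :=
    (continuous_apply 0).prodMk (continuous_pi fun m => continuous_apply (m + 1))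

/-- Absorbing a small discrete index set into the product. -/
def sigmaConstEquiv {S : Type*} (b : S × α ≃ α) : (Σ _ : S, (ℕ → α)) ≃ (ℕ → α) where
  toFun p := consHomeo (b (p.1, p.2 0), fun m => p.2 (m + 1))
  invFun g := ⟨(b.symm (g 0)).1, consHomeo ((b.symm (g 0)).2, fun m => g (m + 1))⟩
  left_inv := by
    rintro ⟨s, f⟩
    have h0 : (consHomeo (b (s, f 0), fun m => f (m + 1))) 0 = b (s, f 0) := rfl
    have hs : ∀ m, (consHomeo (b (s, f 0), fun m => f (m + 1))) (m + 1) = f (m + 1) := fun m => rfl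
    refine Sigma.ext ?_ ?_
    · simp only [h0, Equiv.symm_apply_apply]
    · simp only [h0, hs, Equiv.symm_apply_apply]
      apply heq_of_eq
      funext n
      cases n <;> rfl
  right_inv g := by
    have : b ((b.symm (g 0)).1, (b.symm (g 0)).2) = g 0 := by
      rw [show ((b.symm (g 0)).1, (b.symm (g 0)).2) = b.symm (g 0) from rfl,
        Equiv.apply_symm_apply]
    funext n
    cases n with
    | zero => exact this
    | succ m => rfl

lemma continuous_sigmaConstEquiv {S : Type*} (b : S × α ≃ α) :
    Continuous (sigmaConstEquiv (α := α) b) := by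
  apply continuous_sigma
  intro s
  apply consHomeo.continuous.comp
  apply Continuous.prodMk
  · exact (continuous_of_discreteTopology (f := fun a : α => b (s, a))).comp (continuous_apply 0)
  · exact continuous_pi fun m => continuous_apply (m + 1)

lemma isOpenMap_sigmaConstEquiv {S : Type*} (b : S × α ≃ α) :
    IsOpenMap (sigmaConstEquiv (α := α) b) := by
  rw [isOpenMap_sigma]
  intro s
  have heq : (fun f : ℕ → α => sigmaConstEquiv b ⟨s, f⟩)
      = consHomeo ∘ (Prod.map (fun a : α => b (s, a)) id) ∘ consHomeo.symm := rfl
  rw [heq]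
  apply consHomeo.isOpenMap.comp
  apply IsOpenMap.comp
  · exact IsOpenMap.prodMap (fun V _ => isOpen_discrete _) IsOpenMap.id
  · exact consHomeo.symm.isOpenMap

noncomputable def sigmaConstHomeo {S : Type*} (b : S × α ≃ α) :
    (Σ _ : S, (ℕ → α)) ≃ₜ (ℕ → α) :=
  Equiv.toHomeomorphOfContinuousOpen (sigmaConstEquiv b)
    (continuous_sigmaConstEquiv b) (isOpenMap_sigmaConstEquiv b)

end Stmt0Aux

open Stmt0Aux in
/-- Every nonempty open subset of κ^ω (κ infinite discrete) is homeomorphic to κ^ω. -/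
theorem stmt_0 (α : Type*) [TopologicalSpace α] [DiscreteTopology α] [Infinite α]
    (U : Set (ℕ → α)) (hU : IsOpen U) (hne : U.Nonempty) :
    Nonempty (U ≃ₜ (ℕ → α)) := by
  classical
  obtain ⟨f₀, hf₀⟩ := hne
  have hSne : Nonempty (Sset U) := ⟨⟨tOf hU f₀ hf₀, tOf_mem_Sset hU f₀ hf₀⟩⟩
  -- cardinality : #(Sset U × α) = #α
  have hcard : Cardinal.mk ((Sset U) × α) = Cardinal.mk α := by
    apply le_antisymm
    · calc Cardinal.mk ((Sset U) × α) = Cardinal.mk (Sset U) * Cardinal.mk α := by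
            rw [Cardinal.mk_prod]; simp
      _ ≤ Cardinal.mk (List α) * Cardinal.mk α :=
            mul_le_mul_left (Cardinal.mk_set_le _) _
      _ = Cardinal.mk α * Cardinal.mk α := by rw [Cardinal.mk_list_eq_mk]
      _ = Cardinal.mk α := Cardinal.mul_eq_self (Cardinal.aleph0_le_mk α)
    · obtain ⟨s₀⟩ := hSne
      exact Cardinal.mk_le_of_injective (f := fun a => (s₀, a))
        fun a b h => congrArg Prod.snd h
  obtain ⟨b⟩ := Cardinal.eq.mp hcard
  exact ⟨((sigmaHomeo hU).symm.trans
    (sigmaCongrHomeo fun t => cylHomeo (t : List α))).trans (sigmaConstHomeo b)⟩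
end

section
/- Every dense G_δ subset of κ^ω is homeomorphic to κ^ω. -/
open Set PiNat Cardinal
open scoped Classical
set_option linter.unusedSectionVars false
namespace Stmt3Aux
variable {α : Type*} [TopologicalSpace α] [DiscreteTopology α] [Infinite α]

noncomputable def Nmin (O : Set (ℕ → α)) (x : ℕ → α) : ℕ :=
  if h : ∃ n, cylinder x n ⊆ O then Nat.find h else 0

lemma exists_cyl_subset {O : Set (ℕ → α)} (hO : IsOpen O) {x : ℕ → α} (hx : x ∈ O) :
    ∃ n, cylinder x n ⊆ O := by
  obtain ⟨v, ⟨y, n, rfl⟩, hxv, hvO⟩ :=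
    (isTopologicalBasis_cylinders (fun _ : ℕ => α)).exists_subset_of_mem_open hx hO
  exact ⟨n, by rwa [mem_cylinder_iff_eq.1 hxv]⟩

lemma Nmin_spec {O : Set (ℕ → α)} (hO : IsOpen O) {x : ℕ → α} (hx : x ∈ O) :
    cylinder x (Nmin O x) ⊆ O := by
  have h := exists_cyl_subset hO hx
  rw [Nmin, dif_pos h]
  exact Nat.find_spec h

lemma Nmin_min {O : Set (ℕ → α)} (hO : IsOpen O) {x : ℕ → α} (hx : x ∈ O) {m : ℕ}
    (hm : m < Nmin O x) : ¬ cylinder x m ⊆ O := by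
  have h := exists_cyl_subset hO hx
  rw [Nmin, dif_pos h] at hm
  exact Nat.find_min h hm

lemma cylinder_congr {x y : ℕ → α} {n m : ℕ} (h : y ∈ cylinder x n) (hm : m ≤ n) :
    cylinder y m = cylinder x m := by
  rw [← mem_cylinder_iff_eq]
  exact fun i hi => h i (lt_of_lt_of_le hi hm)

lemma Nmin_congr {O : Set (ℕ → α)} (hO : IsOpen O) {x y : ℕ → α} (hx : x ∈ O)
    (hy : y ∈ cylinder x (Nmin O x)) : Nmin O y = Nmin O x := by
  have hyO : y ∈ O := Nmin_spec hO hx hy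
  refine le_antisymm ?_ ?_
  · by_contra hlt
    push_neg at hlt
    exact Nmin_min hO hyO hlt (by rw [cylinder_congr hy le_rfl]; exact Nmin_spec hO hx)
  · by_contra hlt
    push_neg at hlt
    refine Nmin_min hO hx hlt ?_
    rw [← cylinder_congr hy (le_of_lt hlt)]
    exact Nmin_spec hO hyO

/-- Length of the refined piece at `x`. -/
noncomputable def Mfun (O : Set (ℕ → α)) (L : ℕ) (x : ℕ → α) : ℕ :=
  max (Nmin O x) L + 1

lemma Nmin_lt_Mfun (O : Set (ℕ → α)) (L : ℕ) (x : ℕ → α) : Nmin O x < Mfun O L x :=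
  Nat.lt_succ_of_le (le_max_left _ _)

lemma L_lt_Mfun (O : Set (ℕ → α)) (L : ℕ) (x : ℕ → α) : L < Mfun O L x :=
  Nat.lt_succ_of_le (le_max_right _ _)

lemma piece_subset {O : Set (ℕ → α)} (hO : IsOpen O) {x : ℕ → α} (hx : x ∈ O) (L : ℕ) :
    cylinder x (Mfun O L x) ⊆ O :=
  (cylinder_anti x (Nmin_lt_Mfun O L x).le).trans (Nmin_spec hO hx)

lemma Mfun_congr {O : Set (ℕ → α)} (hO : IsOpen O) {x y : ℕ → α} (hx : x ∈ O) (L : ℕ)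
    (hy : y ∈ cylinder x (Mfun O L x)) : Mfun O L y = Mfun O L x := by
  have h1 : y ∈ cylinder x (Nmin O x) := cylinder_anti x (Nmin_lt_Mfun O L x).le hy
  rw [Mfun, Nmin_congr hO hx h1, Mfun]

/-- The tag of the piece containing `x`: the reversed list of its first `Mfun` values. -/
noncomputable def tag (O : Set (ℕ → α)) (L : ℕ) (x : ℕ → α) : List α :=
  res x (Mfun O L x)

lemma tag_eq_of_mem_piece {O : Set (ℕ → α)} (hO : IsOpen O) {x y : ℕ → α} (hx : x ∈ O) (L : ℕ)
    (hy : y ∈ cylinder x (Mfun O L x)) : tag O L y = tag O L x := by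
  rw [tag, tag, Mfun_congr hO hx L hy, res_eq_res]
  exact hy

lemma mem_piece_of_tag_eq {O : Set (ℕ → α)} {x y : ℕ → α} (L : ℕ)
    (h : tag O L y = tag O L x) : y ∈ cylinder x (Mfun O L x) := by
  have hlen : Mfun O L y = Mfun O L x := by
    have := congrArg List.length h
    rwa [tag, tag, res_length, res_length] at this
  rw [tag, tag, hlen, res_eq_res] at h
  exact h

/-- An equivalence from `α` to the set of tags of pieces of `O`, when it exists. -/
noncomputable def tagEquiv (O : Set (ℕ → α)) (L : ℕ) : α → List α :=
  if h : Nonempty (α ≃ ↥(tag O L '' O)) then fun a => ((Classical.choice h) a : List α)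
  else fun _ => []

lemma tagEquiv_exists {O : Set (ℕ → α)} (hO : IsOpen O) (hne : O.Nonempty) (L : ℕ) :
    Nonempty (α ≃ ↥(tag O L '' O)) := by
  rw [← Cardinal.eq]
  obtain ⟨x₀, hx₀⟩ := hne
  refine le_antisymm ?_ ?_
  · set j : ℕ := max (Nmin O x₀) L with hj
    have hinj : Function.Injective (fun a : α => tag O L (Function.update x₀ j a)) := by
      intro a b hab
      have hmem : ∀ c : α, Function.update x₀ j c ∈ cylinder x₀ (Nmin O x₀) := by
        intro c i hi
        exact Function.update_of_ne (by omega) _ _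
      have hM : ∀ c : α, Mfun O L (Function.update x₀ j c) = Mfun O L x₀ := by
        intro c
        rw [Mfun, Nmin_congr hO hx₀ (hmem c), Mfun]
      have h2 : Function.update x₀ j a ∈ cylinder (Function.update x₀ j b) (Mfun O L x₀) := by
        have := mem_piece_of_tag_eq (O := O) L hab
        rwa [hM b] at this
      have := h2 j (by rw [Mfun]; omega)
      simpa using this
    have hmemO : ∀ a : α, tag O L (Function.update x₀ j a) ∈ tag O L '' O := by
      intro a
      refine mem_image_of_mem _ ?_
      refine Nmin_spec hO hx₀ ?_
      intro i hi
      exact Function.update_of_ne (by omega) _ _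
    exact Cardinal.mk_le_of_injective (f := fun a => (⟨_, hmemO a⟩ : ↥(tag O L '' O)))
      (fun a b hab => hinj (congrArg Subtype.val hab))
  · calc #↥(tag O L '' O) ≤ #(List α) := Cardinal.mk_subtype_le _
      _ = #α := Cardinal.mk_list_eq_mk α

lemma tagEquiv_inj {O : Set (ℕ → α)} (hO : IsOpen O) (hne : O.Nonempty) (L : ℕ) :
    Function.Injective (tagEquiv O L) := by
  rw [tagEquiv, dif_pos (tagEquiv_exists hO hne L)]
  intro a b hab
  exact (Classical.choice (tagEquiv_exists hO hne L)).injective (Subtype.val_injective hab)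

lemma tagEquiv_surj {O : Set (ℕ → α)} (hO : IsOpen O) (hne : O.Nonempty) (L : ℕ)
    {x : ℕ → α} (hx : x ∈ O) : ∃ a, tagEquiv O L a = tag O L x := by
  rw [tagEquiv, dif_pos (tagEquiv_exists hO hne L)]
  obtain ⟨a, ha⟩ := (Classical.choice (tagEquiv_exists hO hne L)).surjective
    ⟨tag O L x, mem_image_of_mem _ hx⟩
  exact ⟨a, by rw [ha]⟩

lemma tagEquiv_mem {O : Set (ℕ → α)} (hO : IsOpen O) (hne : O.Nonempty) (L : ℕ) (a : α) :
    ∃ y ∈ O, tag O L y = tagEquiv O L a := by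
  have h := tagEquiv_exists hO hne L
  rw [tagEquiv, dif_pos h]
  obtain ⟨y, hy, hty⟩ := ((Classical.choice h) a).2
  exact ⟨y, hy, hty⟩

/-- The piece of `O` indexed by `a : α`: a pair (basepoint, length). -/
noncomputable def pick (O : Set (ℕ → α)) (L : ℕ) (a : α) : (ℕ → α) × ℕ :=
  if h : ∃ y, y ∈ O ∧ tag O L y = tagEquiv O L a then
    (h.choose, Mfun O L h.choose)
  else (fun _ => Classical.arbitrary α, 0)

section PickLemmas
variable {O : Set (ℕ → α)} (hO : IsOpen O) (hne : O.Nonempty) (L : ℕ)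
include hO hne

lemma pick_def (a : α) : (pick O L a).1 ∈ O ∧ (pick O L a).2 = Mfun O L (pick O L a).1 ∧
    tag O L (pick O L a).1 = tagEquiv O L a := by
  have h : ∃ y, y ∈ O ∧ tag O L y = tagEquiv O L a := tagEquiv_mem hO hne L a
  rw [pick, dif_pos h]
  exact ⟨h.choose_spec.1, rfl, h.choose_spec.2⟩

lemma pick_mem (a : α) : (pick O L a).1 ∈ O := (pick_def hO hne L a).1

lemma pick_cyl_subset (a : α) : cylinder (pick O L a).1 (pick O L a).2 ⊆ O := by
  rw [(pick_def hO hne L a).2.1]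
  exact piece_subset hO (pick_mem hO hne L a) L

lemma L_lt_pick (a : α) : L < (pick O L a).2 := by
  rw [(pick_def hO hne L a).2.1]; exact L_lt_Mfun O L _

lemma pick_disjoint {a b : α} (hab : a ≠ b) :
    Disjoint (cylinder (pick O L a).1 (pick O L a).2) (cylinder (pick O L b).1 (pick O L b).2) := by
  rw [Set.disjoint_left]
  intro z hza hzb
  obtain ⟨h1a, h2a, h3a⟩ := pick_def hO hne L (a := a)
  obtain ⟨h1b, h2b, h3b⟩ := pick_def hO hne L (a := b)
  rw [h2a] at hza; rw [h2b] at hzb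
  have ta : tag O L z = tagEquiv O L a := by rw [tag_eq_of_mem_piece hO h1a L hza, h3a]
  have tb : tag O L z = tagEquiv O L b := by rw [tag_eq_of_mem_piece hO h1b L hzb, h3b]
  exact hab (tagEquiv_inj hO hne L (ta ▸ tb))

lemma pick_cover {z : ℕ → α} (hz : z ∈ O) :
    ∃ a, z ∈ cylinder (pick O L a).1 (pick O L a).2 := by
  obtain ⟨a, ha⟩ := tagEquiv_surj hO hne L hz
  obtain ⟨h1, h2, h3⟩ := pick_def hO hne L (a := a)
  refine ⟨a, ?_⟩
  rw [h2]
  exact mem_piece_of_tag_eq L (by rw [h3, ha])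

end PickLemmas
lemma mem_cylinder_trans {x y z : ℕ → α} {n m : ℕ} (h1 : z ∈ cylinder y m)
    (h2 : y ∈ cylinder x n) (hnm : n ≤ m) : z ∈ cylinder x n := fun i hi =>
  (h1 i (lt_of_lt_of_le hi hnm)).trans (h2 i hi)


section Scheme
variable (U : ℕ → Set (ℕ → α))

/-- The Cantor scheme: to each finite word we associate a cylinder (basepoint, length). -/
noncomputable def code : List α → (ℕ → α) × ℕ
  | [] => (fun _ => Classical.arbitrary α, 0)
  | a :: s => pick (cylinder (code s).1 (code s).2 ∩ U s.length) (code s).2 a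

variable {U} (hUo : ∀ n, IsOpen (U n)) (hUd : ∀ n, Dense (U n))
include hUo hUd

lemma codeO_open (s : List α) : IsOpen (cylinder (code U s).1 (code U s).2 ∩ U s.length) :=
  (isOpen_cylinder _ _ _).inter (hUo _)

lemma codeO_ne (s : List α) : (cylinder (code U s).1 (code U s).2 ∩ U s.length).Nonempty :=
  (hUd s.length).inter_open_nonempty _ (isOpen_cylinder _ _ _) ⟨_, self_mem_cylinder _ _⟩

lemma code_len_lt (s : List α) (a : α) : (code U s).2 < (code U (a :: s)).2 :=
  L_lt_pick (codeO_open hUo hUd s) (codeO_ne hUo hUd s) _ a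

lemma code_cyl_subset (s : List α) (a : α) :
    cylinder (code U (a :: s)).1 (code U (a :: s)).2 ⊆
      cylinder (code U s).1 (code U s).2 ∩ U s.length :=
  pick_cyl_subset (codeO_open hUo hUd s) (codeO_ne hUo hUd s) _ a

lemma code_mem (s : List α) (a : α) :
    (code U (a :: s)).1 ∈ cylinder (code U s).1 (code U s).2 ∩ U s.length :=
  pick_mem (codeO_open hUo hUd s) (codeO_ne hUo hUd s) _ a

lemma code_disjoint (s : List α) {a b : α} (hab : a ≠ b) :
    Disjoint (cylinder (code U (a :: s)).1 (code U (a :: s)).2)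
      (cylinder (code U (b :: s)).1 (code U (b :: s)).2) :=
  pick_disjoint (codeO_open hUo hUd s) (codeO_ne hUo hUd s) _ hab

lemma code_cover (s : List α) {z : ℕ → α}
    (hz : z ∈ cylinder (code U s).1 (code U s).2 ∩ U s.length) :
    ∃ a, z ∈ cylinder (code U (a :: s)).1 (code U (a :: s)).2 :=
  pick_cover (codeO_open hUo hUd s) (codeO_ne hUo hUd s) _ hz

lemma length_le_code (s : List α) : s.length ≤ (code U s).2 := by
  induction s with
  | nil => simp
  | cons a s ih =>
    have := code_len_lt hUo hUd s a
    simp only [List.length_cons]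
    omega

lemma code_len_mono (b : ℕ → α) {k k' : ℕ} (h : k ≤ k') :
    (code U (res b k)).2 ≤ (code U (res b k')).2 := by
  have : Monotone fun k => (code U (res b k)).2 := by
    apply monotone_nat_of_le_succ
    intro k
    rw [res_succ]
    exact (code_len_lt hUo hUd _ _).le
  exact this h

lemma code_base_mono (b : ℕ → α) {k k' : ℕ} (h : k ≤ k') :
    (code U (res b k')).1 ∈ cylinder (code U (res b k)).1 (code U (res b k)).2 := by
  induction k', h using Nat.le_induction with
  | base => exact self_mem_cylinder _ _
  | succ k' hk ih =>
    have h1 : (code U (res b (k'+1))).1 ∈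
        cylinder (code U (res b k')).1 (code U (res b k')).2 := by
      rw [res_succ]
      exact (code_mem hUo hUd _ _).1
    exact mem_cylinder_trans h1 ih (code_len_mono hUo hUd b hk)

end Scheme

section Limit
variable {U : ℕ → Set (ℕ → α)} (hUo : ∀ n, IsOpen (U n)) (hUd : ∀ n, Dense (U n))

/-- The limit point of the branch `b` through the scheme. -/
noncomputable def limitF (U : ℕ → Set (ℕ → α)) (b : ℕ → α) : ℕ → α :=
  fun i => (code U (res b (i+1))).1 i

include hUo hUd

lemma limitF_mem_cyl (b : ℕ → α) (k : ℕ) :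
    limitF U b ∈ cylinder (code U (res b k)).1 (code U (res b k)).2 := by
  intro i hi
  rcases le_or_gt k (i+1) with h | h
  · exact code_base_mono hUo hUd b h i hi
  · have h2 : (code U (res b k)).1 ∈
        cylinder (code U (res b (i+1))).1 (code U (res b (i+1))).2 :=
      code_base_mono hUo hUd b (by omega)
    have hlen : i < (code U (res b (i+1))).2 := by
      have := length_le_code hUo hUd (res b (i+1))
      rw [res_length] at this
      omega
    exact (h2 i hlen).symm

lemma limitF_mem_U (b : ℕ → α) (n : ℕ) : limitF U b ∈ U n := by
  have h := limitF_mem_cyl hUo hUd b (n+1)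
  rw [res_succ] at h
  have := code_cyl_subset hUo hUd (res b n) (b n) h
  rw [res_length] at this
  exact this.2

lemma limitF_inj : Function.Injective (limitF U) := by
  intro b b' hbb'
  have key : ∀ k, res b k = res b' k := by
    intro k
    induction k with
    | zero => simp
    | succ k ih =>
      rw [res_succ, res_succ, ih]
      have h1 : limitF U b ∈
          cylinder (code U (b k :: res b' k)).1 (code U (b k :: res b' k)).2 := by
        have := limitF_mem_cyl hUo hUd b (k+1)
        rwa [res_succ, ih] at this
      have h2 : limitF U b ∈
          cylinder (code U (b' k :: res b' k)).1 (code U (b' k :: res b' k)).2 := by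
        have := limitF_mem_cyl hUo hUd b' (k+1)
        rwa [res_succ, ← hbb'] at this
      by_contra hne
      have hne' : b k ≠ b' k := fun h => hne (by rw [h])
      exact Set.disjoint_left.1 (code_disjoint hUo hUd (res b' k) hne') h1 h2
  funext i
  have := key (i+1)
  rw [res_succ, res_succ] at this
  exact (List.cons.injEq _ _ _ _ ▸ this).1

lemma code_cyl_mono (b : ℕ → α) {k k' : ℕ} (h : k ≤ k') :
    cylinder (code U (res b k')).1 (code U (res b k')).2 ⊆
      cylinder (code U (res b k)).1 (code U (res b k)).2 := fun z hz =>
  mem_cylinder_trans hz (code_base_mono hUo hUd b h) (code_len_mono hUo hUd b h)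

end Limit

section Chain
variable (U : ℕ → Set (ℕ → α))

/-- The letter chosen at stage `s` for the point `x`. -/
noncomputable def nextLetter (x : ℕ → α) (s : List α) : α :=
  if h : ∃ a, x ∈ cylinder (code U (a :: s)).1 (code U (a :: s)).2 then h.choose
  else Classical.arbitrary α

/-- The chain of words approximating `x`. -/
noncomputable def wchain (x : ℕ → α) : ℕ → List α
  | 0 => []
  | k+1 => nextLetter U x (wchain x k) :: wchain x k

/-- The branch associated to a point `x`. -/
noncomputable def bx (x : ℕ → α) : ℕ → α := fun k => nextLetter U x (wchain U x k)

lemma wchain_length (x : ℕ → α) (k : ℕ) : (wchain U x k).length = k := by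
  induction k with
  | zero => rfl
  | succ k ih => simp [wchain, ih]

lemma res_bx (x : ℕ → α) (k : ℕ) : res (bx U x) k = wchain U x k := by
  induction k with
  | zero => rfl
  | succ k ih => rw [res_succ, ih]; rfl

variable {U} (hUo : ∀ n, IsOpen (U n)) (hUd : ∀ n, Dense (U n))
include hUo hUd

lemma wchain_mem {x : ℕ → α} (hx : ∀ n, x ∈ U n) (k : ℕ) :
    x ∈ cylinder (code U (wchain U x k)).1 (code U (wchain U x k)).2 := by
  induction k with
  | zero =>
    show x ∈ cylinder (code U []).1 (code U []).2
    have : (code U ([] : List α)).2 = 0 := rfl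
    rw [this, cylinder_zero]
    trivial
  | succ k ih =>
    have hcov : ∃ a, x ∈ cylinder (code U (a :: wchain U x k)).1
        (code U (a :: wchain U x k)).2 := by
      apply code_cover hUo hUd
      exact ⟨ih, by rw [wchain_length]; exact hx k⟩
    have hw : wchain U x (k+1) = hcov.choose :: wchain U x k := by
      show nextLetter U x (wchain U x k) :: wchain U x k = _
      rw [nextLetter, dif_pos hcov]
    rw [hw]
    exact hcov.choose_spec

lemma bx_mem_cyl {x : ℕ → α} (hx : ∀ n, x ∈ U n) (k : ℕ) :
    x ∈ cylinder (code U (res (bx U x) k)).1 (code U (res (bx U x) k)).2 := by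
  rw [res_bx]
  exact wchain_mem hUo hUd hx k

lemma limitF_bx {x : ℕ → α} (hx : ∀ n, x ∈ U n) : limitF U (bx U x) = x := by
  funext i
  have h1 := limitF_mem_cyl hUo hUd (bx U x) (i+1)
  have h2 := bx_mem_cyl hUo hUd hx (i+1)
  have hlen : i < (code U (res (bx U x) (i+1))).2 := by
    have := length_le_code hUo hUd (res (bx U x) (i+1))
    rw [res_length] at this
    omega
  exact (h1 i hlen).trans (h2 i hlen).symm

lemma wchain_unique {x : ℕ → α} (hx : ∀ n, x ∈ U n) {b : ℕ → α} {n : ℕ}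
    (hb : x ∈ cylinder (code U (res b n)).1 (code U (res b n)).2) :
    ∀ k, k ≤ n → wchain U x k = res b k := by
  intro k hk
  induction k with
  | zero => rfl
  | succ k ih =>
    have ihk := ih (by omega)
    have hbk : x ∈ cylinder (code U (res b (k+1))).1 (code U (res b (k+1))).2 :=
      code_cyl_mono hUo hUd b hk hb
    have hcov : ∃ a, x ∈ cylinder (code U (a :: wchain U x k)).1
        (code U (a :: wchain U x k)).2 := by
      apply code_cover hUo hUd
      exact ⟨wchain_mem hUo hUd hx k, by rw [wchain_length]; exact hx k⟩
    have hw : wchain U x (k+1) = hcov.choose :: wchain U x k := by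
      show nextLetter U x (wchain U x k) :: wchain U x k = _
      rw [nextLetter, dif_pos hcov]
    have h0 := hcov.choose_spec
    obtain ⟨a0, ha0⟩ : ∃ a0, hcov.choose = a0 := ⟨_, rfl⟩
    rw [ha0] at hw h0
    rw [ihk] at h0
    have h2 : x ∈ cylinder (code U (b k :: res b k)).1 (code U (b k :: res b k)).2 := by
      rwa [res_succ] at hbk
    have hletter : a0 = b k := by
      by_contra hne
      exact Set.disjoint_left.1 (code_disjoint hUo hUd (res b k) hne) h0 h2
    rw [hw, res_succ, hletter, ihk]

end Chain

lemma limitF_continuous (U : ℕ → Set (ℕ → α)) : Continuous (limitF U) := by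
  refine continuous_pi fun i => ?_
  rw [continuous_iff_continuousAt]
  intro b
  have hmem : cylinder b (i+1) ∈ nhds b :=
    (isOpen_cylinder _ _ _).mem_nhds (self_mem_cylinder _ _)
  have hev : (fun b' => limitF U b' i) =ᶠ[nhds b] fun _ => limitF U b i := by
    filter_upwards [hmem] with b' hb'
    have hres : res b' (i+1) = res b (i+1) := res_eq_res.2 fun j hj => hb' j hj
    show (code U (res b' (i+1))).1 i = (code U (res b (i+1))).1 i
    rw [hres]
  exact hev.continuousAt

end Stmt3Aux

/-- Every dense G_δ subset of κ^ω is homeomorphic to κ^ω. -/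
theorem stmt_3 (α : Type*) [TopologicalSpace α] [DiscreteTopology α] [Infinite α]
    (X : Set (ℕ → α)) (h1 : IsGδ X) (h2 : Dense X) :
    Nonempty (X ≃ₜ (ℕ → α)) := by
  classical
  open Stmt3Aux PiNat Set in
  obtain ⟨U, hUo, hX⟩ := h1.eq_iInter_nat
  have hXU : ∀ n, X ⊆ U n := fun n => hX ▸ Set.iInter_subset U n
  have hUd : ∀ n, Dense (U n) := fun n => h2.mono (hXU n)
  have hmemX : ∀ b, limitF U b ∈ X := by
    intro b
    rw [hX]
    exact Set.mem_iInter.2 fun n => limitF_mem_U hUo hUd b n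
  set g : (ℕ → α) → X := fun b => ⟨limitF U b, hmemX b⟩ with hg
  have hginj : Function.Injective g := fun a b hab =>
    limitF_inj hUo hUd (congrArg Subtype.val hab)
  have hgsurj : Function.Surjective g := by
    rintro ⟨x, hx⟩
    have hx' : ∀ n, x ∈ U n := by
      intro n
      exact Set.mem_iInter.1 (hX ▸ hx) n
    exact ⟨bx U x, Subtype.ext (limitF_bx hUo hUd hx')⟩
  have hc : Continuous g := (limitF_continuous U).subtype_mk _
  have hopen : IsOpenMap g := by
    intro W hW
    rw [isOpen_iff_forall_mem_open]
    rintro _ ⟨b, hbW, rfl⟩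
    obtain ⟨v, ⟨y, n, rfl⟩, hbv, hvW⟩ :=
      (isTopologicalBasis_cylinders (fun _ : ℕ => α)).exists_subset_of_mem_open hbW hW
    have hcylW : cylinder b n ⊆ W := by
      rw [mem_cylinder_iff_eq.1 hbv]
      exact hvW
    refine ⟨Subtype.val ⁻¹' (cylinder (code U (res b n)).1 (code U (res b n)).2),
      ?_, (isOpen_cylinder _ _ _).preimage continuous_subtype_val, ?_⟩
    · rintro ⟨x, hxX⟩ hxc
      have hx' : ∀ m, x ∈ U m := fun m => Set.mem_iInter.1 (hX ▸ hxX) m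
      have hres : wchain U x n = res b n := wchain_unique hUo hUd hx' hxc n le_rfl
      have hbx : bx U x ∈ cylinder b n := by
        rw [mem_cylinder_iff, ← res_eq_res, res_bx, hres]
      exact ⟨bx U x, hcylW hbx, Subtype.ext (limitF_bx hUo hUd hx')⟩
    · exact limitF_mem_cyl hUo hUd b n
  exact ⟨(Equiv.toHomeomorphOfContinuousOpen
    (Equiv.ofBijective g ⟨hginj, hgsurj⟩) hc hopen).symm⟩
end

section
/- For every natural number n, the space ω_n^ω can be partitioned into ℵ_n pairwise disjoint subsets, each homeomorphic to the Baire space ω^ω. -/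
set_option linter.unusedSectionVars false

open Set Cardinal Function

universe u v

section PrefList

variable {E : Type*}

def prefList (y : ℕ → E) : ℕ → List E
  | 0 => []
  | k+1 => prefList y k ++ [y k]

lemma prefList_length (y : ℕ → E) (k : ℕ) : (prefList y k).length = k := by
  induction k with
  | zero => rfl
  | succ k ih => simp [prefList, ih]

lemma prefList_congr {y y' : ℕ → E} (k : ℕ) (h : ∀ i < k, y i = y' i) :
    prefList y k = prefList y' k := by
  induction k with
  | zero => rfl
  | succ k ih =>
    simp only [prefList]
    rw [ih (fun i hi => h i (hi.trans (Nat.lt_succ_self k))), h k (Nat.lt_succ_self k)]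

lemma prefList_getLast?_concat (y : ℕ → E) (k : ℕ) :
    (prefList y (k+1)).getLast? = some (y k) := by
  simp [prefList]

def YV (V : List E → Set E) : Set (ℕ → E) := {y | ∀ k, y k ∈ V (prefList y k)}

end PrefList

section ContHelper

/-- A map into a discrete space which is locally determined by a finite prefix of a continuous
"observation" map into a product of discrete spaces is continuous. -/
lemma continuous_prefix_determined {α P Q : Type*} [TopologicalSpace α] [TopologicalSpace P]
    [DiscreteTopology P] [TopologicalSpace Q] [DiscreteTopology Q]
    (u : α → ℕ → P) (hu : Continuous u) (f : α → Q)
    (h : ∀ a, ∃ N, ∀ b, (∀ i < N, u b i = u a i) → f b = f a) : Continuous f := by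
  rw [continuous_iff_continuousAt]
  intro a
  obtain ⟨N, hN⟩ := h a
  have hopen : IsOpen {b | ∀ i < N, u b i = u a i} := by
    have he : {b | ∀ i < N, u b i = u a i} = ⋂ i ∈ Finset.range N, (fun b => u b i) ⁻¹' {u a i} := by
      ext b; simp [Finset.mem_range]
    rw [he]
    exact isOpen_biInter_finset fun i _ =>
      (isOpen_discrete {u a i}).preimage ((continuous_apply i).comp hu)
  have hmem : {b | ∀ i < N, u b i = u a i} ∈ nhds a := hopen.mem_nhds (by simp)
  intro s hs
  rw [Filter.mem_map]
  refine Filter.mem_of_superset hmem ?_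
  intro b hb
  have : f b = f a := hN b hb
  simp only [Set.mem_preimage, this]
  exact mem_of_mem_nhds hs

end ContHelper

/-- An equivalence of discrete spaces is a homeomorphism. -/
def Equiv.toHomeomorphDiscrete {X Y : Type*} [TopologicalSpace X] [TopologicalSpace Y]
    [DiscreteTopology X] [DiscreteTopology Y] (e : X ≃ Y) : X ≃ₜ Y :=
  ⟨e, continuous_of_discreteTopology, continuous_of_discreteTopology⟩

section Tree

variable {B : Type u} {E : Type v} [TopologicalSpace B] [DiscreteTopology B]
  [TopologicalSpace E] [DiscreteTopology E] [Nonempty B]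
  (V : List E → Set E) (eqs : ∀ s : List E, B ≃ ↥(V s))

def tpref (x : ℕ → B) : ℕ → List E
  | 0 => []
  | k+1 => tpref x k ++ [(eqs (tpref x k) (x k)).1]

def tbld (x : ℕ → B) (k : ℕ) : E := (eqs (tpref V eqs x k) (x k)).1

lemma prefList_tbld (x : ℕ → B) (k : ℕ) : prefList (tbld V eqs x) k = tpref V eqs x k := by
  induction k with
  | zero => rfl
  | succ k ih => simp only [prefList, tpref, ih]; rfl

lemma tbld_mem (x : ℕ → B) (k : ℕ) : tbld V eqs x k ∈ V (prefList (tbld V eqs x) k) := by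
  rw [prefList_tbld]; exact (eqs (tpref V eqs x k) (x k)).2

noncomputable def tinvAux (L : List E) (v : E) : B :=
  @dite _ (v ∈ V L) (Classical.dec _) (fun h => (eqs L).symm ⟨v, h⟩) (fun _ => Classical.arbitrary B)

noncomputable def tinv (y : ℕ → E) (k : ℕ) : B := tinvAux V eqs (prefList y k) (y k)

lemma tpref_congr {x x' : ℕ → B} (k : ℕ) (h : ∀ i < k, x i = x' i) :
    tpref V eqs x k = tpref V eqs x' k := by
  induction k with
  | zero => rfl
  | succ k ih =>
    simp only [tpref]
    rw [ih (fun i hi => h i (hi.trans (Nat.lt_succ_self k))), h k (Nat.lt_succ_self k)]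

lemma eqs_tinvAux (L : List E) (v : E) (h : v ∈ V L) :
    ((eqs L) (tinvAux V eqs L v) : E) = v := by
  simp only [tinvAux]
  rw [dif_pos h]
  simp

lemma tinvAux_eqs (L : List E) (b : B) : tinvAux V eqs L ((eqs L b : ↥(V L)) : E) = b := by
  simp only [tinvAux]
  rw [dif_pos (eqs L b).2]
  simp

lemma tpref_tinv (y : ↥(YV V)) (k : ℕ) : tpref V eqs (tinv V eqs y.1) k = prefList y.1 k := by
  induction k with
  | zero => rfl
  | succ k ih =>
    simp only [tpref, prefList]
    rw [ih]
    congr 1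
    simp only [tinv]
    rw [eqs_tinvAux V eqs _ _ (y.2 k)]

noncomputable def treeHomeo : (ℕ → B) ≃ₜ ↥(YV V) where
  toFun x := ⟨tbld V eqs x, fun k => tbld_mem V eqs x k⟩
  invFun y := tinv V eqs y.1
  left_inv x := by
    funext k
    show tinvAux V eqs (prefList (tbld V eqs x) k) (tbld V eqs x k) = x k
    rw [prefList_tbld]
    exact tinvAux_eqs V eqs (tpref V eqs x k) (x k)
  right_inv y := by
    apply Subtype.ext
    funext k
    show (eqs (tpref V eqs (tinv V eqs y.1) k) (tinv V eqs y.1 k) : E) = y.1 k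
    rw [tpref_tinv]
    simp only [tinv]
    exact eqs_tinvAux V eqs _ _ (y.2 k)
  continuous_toFun := by
    apply Continuous.subtype_mk
    apply continuous_pi
    intro k
    apply continuous_prefix_determined (fun x => x) continuous_id
    intro a
    refine ⟨k+1, fun b hb => ?_⟩
    simp only [tbld]
    rw [tpref_congr V eqs k (fun i hi => (hb i (hi.trans (Nat.lt_succ_self k))).symm),
      hb k (Nat.lt_succ_self k)]
  continuous_invFun := by
    apply continuous_pi
    intro k
    apply continuous_prefix_determined (fun (y : ↥(YV V)) => y.1) continuous_subtype_val
    intro a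
    refine ⟨k+1, fun b hb => ?_⟩
    simp only [tinv]
    rw [prefList_congr k (fun i hi => hb i (hi.trans (Nat.lt_succ_self k))),
      hb k (Nat.lt_succ_self k)]

end Tree

section SubHomeo

variable {X : Type u} {Y : Type v} [TopologicalSpace X] [TopologicalSpace Y]

/-- Restrict a homeomorphism to corresponding subsets. -/
def Homeomorph.restrictSets (h : X ≃ₜ Y) (S : Set X) (T : Set Y)
    (hST : ∀ x, x ∈ S ↔ h x ∈ T) : ↥S ≃ₜ ↥T where
  toFun x := ⟨h x.1, (hST x.1).1 x.2⟩
  invFun y := ⟨h.symm y.1, (hST (h.symm y.1)).2 (by rw [h.apply_symm_apply]; exact y.2)⟩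
  left_inv x := Subtype.ext (h.symm_apply_apply x.1)
  right_inv y := Subtype.ext (h.apply_symm_apply y.1)
  continuous_toFun := (h.continuous.comp continuous_subtype_val).subtype_mk _
  continuous_invFun := (h.symm.continuous.comp continuous_subtype_val).subtype_mk _

lemma imageVal_memL {L : Set X} {Z : Set ↥L} (w : ↥(Subtype.val '' Z)) : w.1 ∈ L := by
  obtain ⟨z, _, he⟩ := w.2; exact he ▸ z.2

lemma imageVal_memZ {L : Set X} {Z : Set ↥L} (w : ↥(Subtype.val '' Z)) :
    (⟨w.1, imageVal_memL w⟩ : ↥L) ∈ Z := by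
  obtain ⟨z, hz, he⟩ := w.2
  have : (⟨w.1, imageVal_memL w⟩ : ↥L) = z := Subtype.ext he.symm
  rw [this]; exact hz

/-- The image under `Subtype.val` of a set of elements of a subtype is homeomorphic to it. -/
def imageValHomeo {L : Set X} (Z : Set ↥L) : ↥(Subtype.val '' Z) ≃ₜ ↥Z where
  toFun w := ⟨⟨w.1, imageVal_memL w⟩, imageVal_memZ w⟩
  invFun z := ⟨z.1.1, ⟨z.1, z.2, rfl⟩⟩
  left_inv w := Subtype.ext rfl
  right_inv z := Subtype.ext (Subtype.ext rfl)
  continuous_toFun := (continuous_subtype_val.subtype_mk _).subtype_mk _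
  continuous_invFun := (continuous_subtype_val.comp continuous_subtype_val).subtype_mk _

end SubHomeo

section Corestrict

variable {A : Type u} [TopologicalSpace A]

/-- Corestriction homeomorphism. -/
def corestrictHomeo (C : Set A) (q : (ℕ → A) → Prop) :
    ↥{f : ℕ → A | (∀ m, f m ∈ C) ∧ q f} ≃ₜ ↥{g : ℕ → ↥C | q (fun m => (g m : A))} where
  toFun f := ⟨fun m => ⟨f.1 m, f.2.1 m⟩, f.2.2⟩
  invFun g := ⟨fun m => (g.1 m : A), fun m => (g.1 m).2, g.2⟩
  left_inv f := Subtype.ext rfl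
  right_inv g := Subtype.ext rfl
  continuous_toFun := Continuous.subtype_mk
    (continuous_pi fun m => Continuous.subtype_mk
      ((continuous_apply m).comp continuous_subtype_val) _) _
  continuous_invFun := Continuous.subtype_mk
    (continuous_pi fun m => continuous_subtype_val.comp
      ((continuous_apply m).comp continuous_subtype_val)) _

end Corestrict

section Delete

def skips (j i : ℕ) : ℕ := if i < j then i else i + 1

def unskip (j m : ℕ) : ℕ := if m < j then m else m - 1

lemma skips_ne (j i : ℕ) : skips j i ≠ j := by unfold skips; split <;> omega

lemma unskip_skips (j i : ℕ) : unskip j (skips j i) = i := by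
  unfold skips unskip; split <;> (try split) <;> omega

lemma skips_unskip (j m : ℕ) (h : m ≠ j) : skips j (unskip j m) = m := by
  unfold skips unskip; split <;> (try split) <;> omega

variable {A : Type u} [TopologicalSpace A]

/-- Deleting a fixed coordinate. -/
def deleteHomeo (j : ℕ) (a : A) (C : ℕ → Set A) :
    ↥{f : ℕ → A | f j = a ∧ ∀ i, i ≠ j → f i ∈ C i} ≃ₜ
      ↥{g : ℕ → A | ∀ i, g i ∈ C (skips j i)} where
  toFun f := ⟨fun i => f.1 (skips j i), fun i => f.2.2 _ (skips_ne j i)⟩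
  invFun g := ⟨fun m => if m = j then a else g.1 (unskip j m), by
    refine ⟨by simp, fun i hi => ?_⟩
    simp only [if_neg hi]
    have := g.2 (unskip j i)
    rwa [skips_unskip j i hi] at this⟩
  left_inv f := Subtype.ext (funext fun m => by
    by_cases hm : m = j
    · simp [hm, f.2.1]
    · simp [hm, skips_unskip j m hm])
  right_inv g := Subtype.ext (funext fun i => by
    simp [skips_ne j i, unskip_skips])
  continuous_toFun := by
    apply Continuous.subtype_mk
    apply continuous_pi
    intro i
    exact (continuous_apply (skips j i)).comp continuous_subtype_val
  continuous_invFun := by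
    apply Continuous.subtype_mk
    apply continuous_pi
    intro m
    by_cases hm : m = j
    · simp only [hm, if_pos]; exact continuous_const
    · simp only [if_neg hm]
      exact (continuous_apply (unskip j m)).comp continuous_subtype_val

end Delete

section Partition

/-- Partition of `L` into nonempty pieces, each homeomorphic to Baire space. -/
def IsBairePartition {X : Type u} [TopologicalSpace X] {I : Type v} (S : I → Set X)
    (L : Set X) : Prop :=
  Pairwise (Function.onFun Disjoint S) ∧ (∀ i, (S i).Nonempty) ∧ (⋃ i, S i) = L ∧
    ∀ i, Nonempty (↥(S i) ≃ₜ (ℕ → ℕ))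

lemma transportPartition {X : Type u} {Y : Type v} [TopologicalSpace X] [TopologicalSpace Y]
    {I : Type*} {L : Set X} (h : ↥L ≃ₜ Y) {S : I → Set Y} (hS : IsBairePartition S Set.univ) :
    ∃ T : I → Set X, IsBairePartition T L := by
  refine ⟨fun i => Subtype.val '' (⇑h ⁻¹' S i), ?_, ?_, ?_, ?_⟩
  · intro i j hij
    exact (Set.disjoint_image_iff Subtype.val_injective).2 ((hS.1 hij).preimage ⇑h)
  · intro i
    obtain ⟨y, hy⟩ := hS.2.1 i
    exact ⟨(h.symm y).1, ⟨h.symm y, by simp [hy], rfl⟩⟩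
  · rw [← Set.image_iUnion, ← Set.preimage_iUnion, hS.2.2.1]
    simp [Subtype.coe_image_univ]
  · intro i
    obtain ⟨e⟩ := hS.2.2.2 i
    exact ⟨((imageValHomeo _).trans (h.restrictSets _ _ (fun x => Iff.rfl))).trans e⟩

lemma reindexPartition {X : Type u} [TopologicalSpace X] {I J : Type*} (e : J ≃ I)
    {S : I → Set X} {L : Set X} (hS : IsBairePartition S L) :
    IsBairePartition (fun j => S (e j)) L := by
  refine ⟨fun i j hij => hS.1 (fun hh => hij (e.injective hh)), fun j => hS.2.1 _,
    ?_, fun j => hS.2.2.2 _⟩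
  rw [Function.Surjective.iUnion_comp e.surjective (fun i => S i)]
  exact hS.2.2.1

end Partition

section Block

@[ext] structure Blk (D : Type u) : Type u where
  hd : D
  wd : List D

instance BlkTop {D : Type u} : TopologicalSpace (Blk D) := ⊥
instance BlkDisc {D : Type u} : DiscreteTopology (Blk D) := ⟨rfl⟩

variable {D : Type u} (r : D → ℕ)

/-- functions whose rank sequence is unbounded -/
def unbSet : Set (ℕ → D) := {g | ∀ k, ∃ m, k ≤ r (g m)}

def blockV : List (Blk D) → Set (Blk D) := fun s =>
  {e | (∀ x ∈ e.wd, r x ≤ r e.hd) ∧ ∀ p ∈ s.getLast?, r p.hd < r e.hd}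

/- ### decoding -/

def bstart (y : ℕ → Blk D) : ℕ → ℕ
  | 0 => 0
  | k+1 => bstart y k + (y k).wd.length + 1

lemma bstart_succ (y : ℕ → Blk D) (k : ℕ) :
    bstart y (k+1) = bstart y k + (y k).wd.length + 1 := rfl

lemma bstart_lt_succ (y : ℕ → Blk D) (k : ℕ) : bstart y k < bstart y (k+1) := by
  rw [bstart_succ]; omega

lemma bstart_mono (y : ℕ → Blk D) : Monotone (bstart y) :=
  monotone_nat_of_le_succ (fun k => (bstart_lt_succ y k).le)

lemma le_bstart (y : ℕ → Blk D) (k : ℕ) : k ≤ bstart y k := by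
  induction k with
  | zero => exact le_rfl
  | succ k ih => have := bstart_lt_succ y k; omega

lemma bidx_ex (y : ℕ → Blk D) (m : ℕ) : ∃ k, m < bstart y (k+1) :=
  ⟨m, lt_of_lt_of_le (Nat.lt_succ_self m) (le_bstart y (m+1))⟩

noncomputable def bidx (y : ℕ → Blk D) (m : ℕ) : ℕ := Nat.find (bidx_ex y m)

lemma bidx_eq (y : ℕ → Blk D) (m k : ℕ) (h1 : bstart y k ≤ m) (h2 : m < bstart y (k+1)) :
    bidx y m = k := by
  rw [bidx, Nat.find_eq_iff]
  exact ⟨h2, fun n hn => not_lt.mpr ((bstart_mono y (Nat.succ_le_of_lt hn)).trans h1)⟩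

lemma bidx_le (y : ℕ → Blk D) (m : ℕ) : bidx y m ≤ m :=
  Nat.find_le (lt_of_lt_of_le (Nat.lt_succ_self m) (le_bstart y (m+1)))

noncomputable def bdec (y : ℕ → Blk D) (m : ℕ) : D :=
  ((y (bidx y m)).hd :: (y (bidx y m)).wd).getD (m - bstart y (bidx y m)) (y 0).hd

lemma bdec_spec (y : ℕ → Blk D) (k m : ℕ) (h1 : bstart y k ≤ m) (h2 : m < bstart y (k+1)) :
    bdec y m = ((y k).hd :: (y k).wd).getD (m - bstart y k) (y 0).hd := by
  rw [bdec, bidx_eq y m k h1 h2]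

lemma bdec_hd (y : ℕ → Blk D) (k : ℕ) : bdec y (bstart y k) = (y k).hd := by
  rw [bdec_spec y k _ le_rfl (bstart_lt_succ y k)]
  simp

lemma bdec_wd (y : ℕ → Blk D) (k t : ℕ) (ht : t < (y k).wd.length) :
    bdec y (bstart y k + 1 + t) = (y k).wd.getD t (y 0).hd := by
  rw [bdec_spec y k _ (by omega) (by rw [bstart_succ]; omega)]
  have h : bstart y k + 1 + t - bstart y k = t + 1 := by omega
  rw [h, List.getD_cons_succ]

/- facts about members of `YV (blockV r)` -/

lemma yv_hd_lt {y : ℕ → Blk D} (hy : y ∈ YV (blockV r)) (k : ℕ) :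
    r (y k).hd < r (y (k+1)).hd := by
  have h := (hy (k+1)).2
  rw [prefList_getLast?_concat] at h
  exact h (y k) rfl

lemma yv_hd_ge {y : ℕ → Blk D} (hy : y ∈ YV (blockV r)) (k : ℕ) : k ≤ r (y k).hd := by
  induction k with
  | zero => exact Nat.zero_le _
  | succ k ih => have := yv_hd_lt r hy k; omega

lemma bdec_mem {y : ℕ → Blk D} (hy : y ∈ YV (blockV r)) : bdec y ∈ unbSet r := by
  intro k
  refine ⟨bstart y k, ?_⟩
  rw [bdec_hd]
  exact yv_hd_ge r hy k

lemma bdec_word_rank {y : ℕ → Blk D} (hy : y ∈ YV (blockV r)) (k : ℕ) {m : ℕ}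
    (h1 : bstart y k < m) (h2 : m < bstart y (k+1)) : r (bdec y m) ≤ r ((y k).hd) := by
  have hs := bstart_succ y k
  have ht : m - bstart y k - 1 < (y k).wd.length := by omega
  have hm : m = bstart y k + 1 + (m - bstart y k - 1) := by omega
  rw [hm, bdec_wd y k _ ht]
  have hmem : (y k).wd.getD (m - bstart y k - 1) (y 0).hd ∈ (y k).wd := by
    rw [List.getD_eq_getElem _ _ ht]
    exact List.getElem_mem ht
  exact (hy k).1 _ hmem

lemma bdec_rank_le {y : ℕ → Blk D} (hy : y ∈ YV (blockV r)) (k : ℕ) :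
    ∀ i ≤ bstart y k, r (bdec y i) ≤ r ((y k).hd) := by
  induction k with
  | zero =>
    intro i hi
    have h0 : bstart y 0 = 0 := rfl
    rw [h0] at hi
    have : i = 0 := Nat.le_zero.mp hi
    subst this
    have hb : bdec y 0 = (y 0).hd := bdec_hd y 0
    rw [hb]
  | succ k ih =>
    intro i hi
    rcases eq_or_lt_of_le hi with h | h
    · subst h
      have hb : bdec y (bstart y (k+1)) = (y (k+1)).hd := bdec_hd y (k+1)
      rw [hb]
    · rcases le_or_gt i (bstart y k) with h' | h'
      · exact (ih i h').trans (yv_hd_lt r hy k).le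
      · exact (bdec_word_rank r hy k h' h).trans (yv_hd_lt r hy k).le

/- ### encoding -/

lemma exists_dom (g : ℕ → D) (hg : g ∈ unbSet r) (N : ℕ) :
    ∃ m, ∀ i ≤ N, r (g i) < r (g m) := by
  obtain ⟨m, hm⟩ := hg ((Finset.range (N+1)).sup (fun i => r (g i)) + 1)
  refine ⟨m, fun i hi => ?_⟩
  have h2 : r (g i) ≤ (Finset.range (N+1)).sup (fun i => r (g i)) :=
    Finset.le_sup (f := fun i => r (g i)) (Finset.mem_range.mpr (by omega))
  exact lt_of_le_of_lt h2 (by omega)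

noncomputable def rpos (g : ℕ → D) (hg : g ∈ unbSet r) : ℕ → ℕ
  | 0 => 0
  | k+1 => Nat.find (exists_dom r g hg (rpos g hg k))

lemma rpos_dom (g : ℕ → D) (hg : g ∈ unbSet r) (k : ℕ) :
    ∀ i ≤ rpos r g hg k, r (g i) < r (g (rpos r g hg (k+1))) :=
  Nat.find_spec (exists_dom r g hg (rpos r g hg k))

lemma rpos_not_dom (g : ℕ → D) (hg : g ∈ unbSet r) (k : ℕ) {m : ℕ}
    (hm : m < rpos r g hg (k+1)) : ¬ (∀ i ≤ rpos r g hg k, r (g i) < r (g m)) :=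
  Nat.find_min (exists_dom r g hg (rpos r g hg k)) hm

lemma rpos_lt (g : ℕ → D) (hg : g ∈ unbSet r) (k : ℕ) :
    rpos r g hg k < rpos r g hg (k+1) := by
  by_contra h
  exact absurd (rpos_dom r g hg k (rpos r g hg (k+1)) (not_lt.mp h)) (by simp)

lemma rpos_max (g : ℕ → D) (hg : g ∈ unbSet r) (k : ℕ) :
    ∀ i ≤ rpos r g hg k, r (g i) ≤ r (g (rpos r g hg k)) := by
  induction k with
  | zero =>
    intro i hi
    have : i = 0 := by simpa [rpos] using hi
    subst this; exact le_rfl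
  | succ k ih =>
    intro i hi
    rcases eq_or_lt_of_le hi with h | h
    · subst h; exact le_rfl
    · rcases le_or_gt i (rpos r g hg k) with h' | h'
      · exact (ih i h').trans (rpos_dom r g hg k _ le_rfl).le
      · have hnd := rpos_not_dom r g hg k h
        push_neg at hnd
        obtain ⟨i', hi', hge⟩ := hnd
        exact (hge.trans (ih i' hi')).trans (rpos_dom r g hg k _ le_rfl).le

lemma rpos_word (g : ℕ → D) (hg : g ∈ unbSet r) (k : ℕ) {i : ℕ}
    (h1 : rpos r g hg k < i) (h2 : i < rpos r g hg (k+1)) :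
    r (g i) ≤ r (g (rpos r g hg k)) := by
  have hnd := rpos_not_dom r g hg k h2
  push_neg at hnd
  obtain ⟨i', hi', hge⟩ := hnd
  exact hge.trans (rpos_max r g hg k i' hi')

noncomputable def benc (g : ℕ → D) (hg : g ∈ unbSet r) (k : ℕ) : Blk D :=
  ⟨g (rpos r g hg k),
    List.ofFn (fun t : Fin (rpos r g hg (k+1) - rpos r g hg k - 1) =>
      g (rpos r g hg k + 1 + t))⟩

lemma benc_wd_length (g : ℕ → D) (hg : g ∈ unbSet r) (k : ℕ) :
    (benc r g hg k).wd.length = rpos r g hg (k+1) - rpos r g hg k - 1 := by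
  simp [benc]

lemma benc_wd_getD (g : ℕ → D) (hg : g ∈ unbSet r) (k t : ℕ) (d : D)
    (ht : t < rpos r g hg (k+1) - rpos r g hg k - 1) :
    (benc r g hg k).wd.getD t d = g (rpos r g hg k + 1 + t) := by
  rw [List.getD_eq_getElem _ _ (by rw [benc_wd_length]; exact ht)]
  simp [benc]

lemma benc_mem (g : ℕ → D) (hg : g ∈ unbSet r) (k : ℕ) :
    benc r g hg k ∈ blockV r (prefList (benc r g hg) k) := by
  constructor
  · intro x hx
    rw [benc, List.mem_ofFn] at hx
    obtain ⟨t, rfl⟩ := hx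
    have h2 : rpos r g hg k + 1 + (t : ℕ) < rpos r g hg (k+1) := by
      have := t.2; have := rpos_lt r g hg k; omega
    exact rpos_word r g hg k (by omega) h2
  · intro p hp
    cases k with
    | zero => simp [prefList] at hp
    | succ k =>
      rw [prefList_getLast?_concat] at hp
      have : p = benc r g hg k := by simpa using hp.symm
      subst this
      exact rpos_dom r g hg k _ le_rfl

lemma bstart_benc (g : ℕ → D) (hg : g ∈ unbSet r) (k : ℕ) :
    bstart (benc r g hg) k = rpos r g hg k := by
  induction k with
  | zero => rfl
  | succ k ih =>
    rw [bstart_succ, ih, benc_wd_length]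
    have := rpos_lt r g hg k
    omega

lemma bstart_bidx_le (y : ℕ → Blk D) (m : ℕ) : bstart y (bidx y m) ≤ m := by
  rcases Nat.eq_zero_or_pos (bidx y m) with h | h
  · rw [h]; exact Nat.zero_le m
  · obtain ⟨k₁, hk⟩ := Nat.exists_eq_succ_of_ne_zero h.ne'
    by_contra hc
    push_neg at hc
    rw [hk] at hc
    have hle : bidx y m ≤ k₁ := Nat.find_le hc
    omega

lemma bdec_benc (g : ℕ → D) (hg : g ∈ unbSet r) : bdec (benc r g hg) = g := by
  funext m
  have h1 := bstart_bidx_le (benc r g hg) m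
  have h2 : m < bstart (benc r g hg) (bidx (benc r g hg) m + 1) :=
    Nat.find_spec (bidx_ex (benc r g hg) m)
  set k := bidx (benc r g hg) m with hk
  rw [bstart_benc] at h1 h2
  rcases eq_or_lt_of_le h1 with h | h
  · have hm : m = bstart (benc r g hg) k := by rw [bstart_benc]; omega
    conv_lhs => rw [hm, bdec_hd]
    show g (rpos r g hg k) = g m
    rw [h]
  · have ht : m - rpos r g hg k - 1 < rpos r g hg (k+1) - rpos r g hg k - 1 := by omega
    have hm : m = bstart (benc r g hg) k + 1 + (m - rpos r g hg k - 1) := by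
      rw [bstart_benc]; omega
    conv_lhs => rw [hm]
    rw [bdec_wd _ k _ (by rw [benc_wd_length]; exact ht),
      benc_wd_getD r g hg k _ _ ht]
    congr 1
    omega

lemma rpos_eq_bstart {y : ℕ → Blk D} (hy : y ∈ YV (blockV r)) (k : ℕ) :
    rpos r (bdec y) (bdec_mem r hy) k = bstart y k := by
  induction k with
  | zero => rfl
  | succ k ih =>
    have : rpos r (bdec y) (bdec_mem r hy) (k+1)
        = Nat.find (exists_dom r (bdec y) (bdec_mem r hy) (rpos r (bdec y) (bdec_mem r hy) k)) :=
      rfl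
    rw [this, Nat.find_eq_iff]
    constructor
    · intro i hi
      rw [ih] at hi
      have hb : bdec y (bstart y (k+1)) = (y (k+1)).hd := bdec_hd y (k+1)
      rw [hb]
      exact lt_of_le_of_lt (bdec_rank_le r hy k i hi) (yv_hd_lt r hy k)
    · intro m hm hP
      rw [ih] at hP
      rcases le_or_gt m (bstart y k) with h | h
      · exact absurd (hP m h) (by simp)
      · have hub := hP (bstart y k) le_rfl
        have hb : bdec y (bstart y k) = (y k).hd := bdec_hd y k
        rw [hb] at hub
        have := bdec_word_rank r hy k h hm
        omega

lemma benc_bdec {y : ℕ → Blk D} (hy : y ∈ YV (blockV r)) (k : ℕ) :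
    benc r (bdec y) (bdec_mem r hy) k = y k := by
  have hs := bstart_succ y k
  have e0 := rpos_eq_bstart r hy k
  have e1 := rpos_eq_bstart r hy (k+1)
  ext : 1
  · simp only [benc]
    rw [e0, bdec_hd]
  · simp only [benc]
    apply List.ext_getElem
    · rw [List.length_ofFn, e0, e1]
      omega
    · intro t h₁ h₂
      rw [List.getElem_ofFn]
      simp only [e0]
      rw [bdec_wd y k t (by simpa using h₂),
        List.getD_eq_getElem _ _ (by simpa using h₂)]

lemma rpos_mono (g : ℕ → D) (hg : g ∈ unbSet r) : StrictMono (rpos r g hg) :=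
  strictMono_nat_of_lt_succ (rpos_lt r g hg)

lemma rpos_agree (g g' : ℕ → D) (hg : g ∈ unbSet r) (hg' : g' ∈ unbSet r) (K N : ℕ)
    (hN : rpos r g hg (K+1) < N) (ha : ∀ i < N, g' i = g i) :
    ∀ j, j ≤ K+1 → rpos r g' hg' j = rpos r g hg j := by
  intro j
  induction j with
  | zero => intro _; rfl
  | succ j ih =>
    intro hj
    have ihj := ih (by omega)
    have hrj : rpos r g hg j < N :=
      lt_of_le_of_lt (le_of_lt (lt_of_lt_of_le (rpos_mono r g hg (Nat.lt_succ_self j))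
        (rpos_mono r g hg |>.monotone hj))) hN
    have hrj1 : rpos r g hg (j+1) < N :=
      lt_of_le_of_lt (rpos_mono r g hg |>.monotone hj) hN
    have : rpos r g' hg' (j+1) = Nat.find (exists_dom r g' hg' (rpos r g' hg' j)) := rfl
    rw [this, Nat.find_eq_iff]
    constructor
    · intro i hi
      rw [ihj] at hi
      rw [ha i (by omega), ha (rpos r g hg (j+1)) hrj1]
      exact rpos_dom r g hg j i hi
    · intro m hm hP
      rw [ihj] at hP
      refine rpos_not_dom r g hg j hm ?_
      intro i hi
      have := hP i hi
      rwa [ha i (by omega), ha m (by omega)] at this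
  
lemma benc_agree (g g' : ℕ → D) (hg : g ∈ unbSet r) (hg' : g' ∈ unbSet r) (k N : ℕ)
    (hN : rpos r g hg (k+1) < N) (ha : ∀ i < N, g' i = g i) :
    benc r g' hg' k = benc r g hg k := by
  have e0 := rpos_agree r g g' hg hg' k N hN ha k (by omega)
  have e1 := rpos_agree r g g' hg hg' k N hN ha (k+1) le_rfl
  have hrk : rpos r g hg k < N := lt_of_lt_of_le (rpos_lt r g hg k) (by omega)
  ext : 1
  · simp only [benc, e0]
    exact ha _ hrk
  · simp only [benc, e0, e1]
    apply List.ext_getElem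
    · simp
    · intro t h₁ h₂
      simp only [List.getElem_ofFn]
      apply ha
      simp only [List.length_ofFn] at h₁
      omega

lemma bstart_agree (y y' : ℕ → Blk D) (M : ℕ) (ha : ∀ i < M, y' i = y i) :
    ∀ k ≤ M, bstart y' k = bstart y k := by
  intro k
  induction k with
  | zero => intro _; rfl
  | succ k ih =>
    intro hk
    rw [bstart_succ, bstart_succ, ih (by omega), ha k (by omega)]

lemma bdec_agree (y y' : ℕ → Blk D) (m : ℕ) (ha : ∀ i < m+1, y' i = y i) :
    bdec y' m = bdec y m := by
  have hb := bidx_le y m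
  have hidx : bidx y' m = bidx y m := by
    apply bidx_eq
    · rw [bstart_agree y y' (m+1) ha _ (by omega)]
      exact bstart_bidx_le y m
    · rw [bstart_agree y y' (m+1) ha _ (by omega)]
      exact Nat.find_spec (bidx_ex y m)
  rw [bdec, bdec, hidx, ha (bidx y m) (by omega),
    bstart_agree y y' (m+1) ha _ (by omega), ha 0 (by omega)]

variable [TopologicalSpace D] [DiscreteTopology D]

/-- The block-coding homeomorphism. -/
noncomputable def blockHomeo : ↥(unbSet r) ≃ₜ ↥(YV (blockV r)) where
  toFun g := ⟨benc r g.1 g.2, fun k => benc_mem r g.1 g.2 k⟩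
  invFun y := ⟨bdec y.1, bdec_mem r y.2⟩
  left_inv g := Subtype.ext (bdec_benc r g.1 g.2)
  right_inv y := Subtype.ext (funext fun k => benc_bdec r y.2 k)
  continuous_toFun := by
    apply Continuous.subtype_mk
    apply continuous_pi
    intro k
    apply continuous_prefix_determined (fun (g : ↥(unbSet r)) => g.1) continuous_subtype_val
    intro a
    refine ⟨rpos r a.1 a.2 (k+1) + 1, fun b hb => ?_⟩
    exact benc_agree r a.1 b.1 a.2 b.2 k _ (Nat.lt_succ_self _) hb
  continuous_invFun := by
    apply Continuous.subtype_mk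
    apply continuous_pi
    intro m
    apply continuous_prefix_determined (fun (y : ↥(YV (blockV r))) => y.1) continuous_subtype_val
    intro a
    refine ⟨m+1, fun b hb => ?_⟩
    exact bdec_agree a.1 b.1 m hb

end Block

section Levels

variable {B O : Type u} [LinearOrder O]

def USet (x : O) : Set (B ⊕ O) := {z | ∀ w, z = Sum.inr w → w < x}

lemma inl_mem_USet (b : B) (x : O) : (Sum.inl b : B ⊕ O) ∈ USet x := by simp [USet]

lemma inr_mem_USet {w x : O} : (Sum.inr w : B ⊕ O) ∈ USet x ↔ w < x := by simp [USet]

lemma USet_mono {x y : O} (h : x ≤ y) : (USet x : Set (B ⊕ O)) ⊆ USet y := by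
  rintro (b | w) hz
  · exact inl_mem_USet b y
  · exact inr_mem_USet.2 (lt_of_lt_of_le (inr_mem_USet.1 hz) h)

lemma USet_eq_union (x : O) :
    (USet x : Set (B ⊕ O)) = Sum.inl '' Set.univ ∪ Sum.inr '' Set.Iio x := by
  ext z
  rcases z with b | w <;> simp [USet]

end Levels

section Glue

lemma subset_of_partition {X : Type u} [TopologicalSpace X] {I : Type v} {S : I → Set X}
    {L : Set X} (h : IsBairePartition S L) (i : I) : S i ⊆ L :=
  h.2.2.1 ▸ Set.subset_iUnion S i

lemma gluePartition {X : Type u} [TopologicalSpace X] {O B : Type u} (L : O → Set X)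
    (hdisj : Pairwise (Function.onFun Disjoint L)) (hcov : ⋃ x, L x = Set.univ)
    (hP : ∀ x : O, (L x).Nonempty → ∃ P : B → Set X, IsBairePartition P (L x)) :
    ∃ T : ({x : O // (L x).Nonempty} × B) → Set X, IsBairePartition T Set.univ := by
  choose P hPp using hP
  refine ⟨fun p => P p.1.1 p.1.2 p.2, ?_, fun p => (hPp p.1.1 p.1.2).2.1 p.2, ?_, 
    fun p => (hPp p.1.1 p.1.2).2.2.2 p.2⟩
  · intro p q hpq
    by_cases hx : p.1 = q.1
    · have hb : p.2 ≠ q.2 := by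
        intro hb; exact hpq (Prod.ext hx hb)
      have := (hPp q.1.1 q.1.2).1 hb
      show Disjoint (P p.1.1 p.1.2 p.2) (P q.1.1 q.1.2 q.2)
      rw [show p.1 = q.1 from hx]
      exact this
    · have hxx : p.1.1 ≠ q.1.1 := fun h => hx (Subtype.ext h)
      exact Set.disjoint_of_subset (subset_of_partition (hPp p.1.1 p.1.2) p.2)
        (subset_of_partition (hPp q.1.1 q.1.2) q.2) (hdisj hxx)
  · apply Set.eq_univ_of_univ_subset
    intro ξ _
    have : ξ ∈ ⋃ x, L x := by rw [hcov]; trivial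
    obtain ⟨x, hx⟩ := Set.mem_iUnion.1 this
    have hne : (L x).Nonempty := ⟨ξ, hx⟩
    have : ξ ∈ ⋃ b, P x hne b := by rw [(hPp x hne).2.2.1]; exact hx
    obtain ⟨b, hb⟩ := Set.mem_iUnion.1 this
    exact Set.mem_iUnion.2 ⟨(⟨x, hne⟩, b), hb⟩

end Glue

section BoxH

variable {A : Type u} {B : Type v} [TopologicalSpace A] [DiscreteTopology A]
  [TopologicalSpace B] [DiscreteTopology B] [Nonempty B]

/-- A box with all sides equivalent to `B` is homeomorphic to `ℕ → B`. -/
noncomputable def boxHomeo (C : ℕ → Set A) (en : ∀ i, B ≃ ↥(C i)) :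
    ↥{f : ℕ → A | ∀ i, f i ∈ C i} ≃ₜ (ℕ → B) :=
  ((Homeomorph.setCongr (show {f : ℕ → A | ∀ i, f i ∈ C i} = YV (fun s => C s.length) by
      ext f
      simp only [YV, Set.mem_setOf_eq, prefList_length])).trans
    (treeHomeo (fun s : List A => C s.length) (fun s => en s.length)).symm)

lemma partitionOfHomeo {A' : Type u} {B' : Type u} [TopologicalSpace A'] [TopologicalSpace B']
    [DiscreteTopology B'] (L : Set (ℕ → A')) (h : ↥L ≃ₜ (ℕ → B'))
    (IHB : ∃ S : B' → Set (ℕ → B'), IsBairePartition S Set.univ) :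
    ∃ T : B' → Set (ℕ → A'), IsBairePartition T L := by
  obtain ⟨S, hS⟩ := IHB
  exact transportPartition h hS

end BoxH

noncomputable def equivOfCard {X Y : Type u} (h : #X = #Y) : X ≃ Y :=
  Classical.choice (Cardinal.eq.1 h)

section SumPart

lemma sumPartition (n : ℕ) (B O : Type u) [TopologicalSpace B] [DiscreteTopology B]
    [LinearOrder O] [WellFoundedLT O]
    [TopologicalSpace (B ⊕ O)] [DiscreteTopology (B ⊕ O)]
    (hB : #B = Cardinal.aleph n)
    (hcov : ∀ f : ℕ → B ⊕ O, ∃ x : O, ∀ m, f m ∈ USet x)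
    (hU : ∀ x : O, #(USet x : Set (B ⊕ O)) = Cardinal.aleph n)
    (hnomax : ∀ x : O, ∃ y, x < y)
    (IH : ∀ (C : Type u) [TopologicalSpace C] [DiscreteTopology C], #C = Cardinal.aleph n →
      ∃ S : C → Set (ℕ → C), IsBairePartition S Set.univ) :
    ∃ (I : Type u) (T : I → Set (ℕ → B ⊕ O)), IsBairePartition T Set.univ ∧
      Cardinal.mk O ≤ Cardinal.mk I ∧ Cardinal.mk I ≤ Cardinal.mk O * Cardinal.aleph n := by
  classical
  haveI hBne : Nonempty B := by
    rw [← Cardinal.mk_ne_zero_iff (α := B), hB]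
    exact (Cardinal.aleph_pos _).ne'
  haveI : Infinite B := Cardinal.infinite_iff.2 (by rw [hB]; exact Cardinal.aleph0_le_aleph _)
  set lev : (ℕ → B ⊕ O) → O := fun f =>
    WellFounded.min wellFounded_lt {x | ∀ m, f m ∈ USet x} (hcov f) with hlevdef
  have lev_mem : ∀ f, ∀ m, f m ∈ USet (lev f) := fun f =>
    WellFounded.min_mem wellFounded_lt {x | ∀ m, f m ∈ USet x} (hcov f)
  have lev_min : ∀ f y, y < lev f → ¬(∀ m, f m ∈ USet y) := fun f y hy hmem =>
    WellFounded.not_lt_min wellFounded_lt {x | ∀ m, f m ∈ USet x} (x := y) hmem hy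
  have lev_eq : ∀ f x, (∀ m, f m ∈ USet x) → (∀ y, y < x → ¬(∀ m, f m ∈ USet y)) →
      lev f = x := by
    intro f x h1 h2
    rcases lt_trichotomy (lev f) x with h | h | h
    · exact absurd (lev_mem f) (h2 _ h)
    · exact h
    · exact absurd h1 (lev_min f x h)
  set L : O → Set (ℕ → B ⊕ O) := fun x => {f | lev f = x} with hLdef
  have Ldisj : Pairwise (Function.onFun Disjoint L) := by
    intro x y hxy
    simp only [Function.onFun, Set.disjoint_left]
    intro f hf hg
    exact hxy ((show lev f = x from hf) ▸ (show lev f = y from hg) ▸ rfl)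
  have Lcov : ⋃ x, L x = Set.univ :=
    Set.eq_univ_of_forall (fun f => Set.mem_iUnion.2 ⟨lev f, rfl⟩)
  have perLevel : ∀ x : O, (L x).Nonempty →
      ∃ P : B → Set (ℕ → B ⊕ O), IsBairePartition P (L x) := by
    intro x hne
    by_cases hmin : ∀ y, ¬ y < x
    · -- minimal level
      have hLx : L x = {f | ∀ m, f m ∈ USet x} := by
        ext f
        constructor
        · intro hf m
          exact (show lev f = x from hf) ▸ lev_mem f m
        · intro hf
          exact lev_eq f x hf (fun y hy => absurd hy (hmin y))
      exact partitionOfHomeo _ ((Homeomorph.setCongr hLx).trans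
        (boxHomeo (fun _ => USet x) (fun _ => equivOfCard (hB.trans (hU x).symm)))) (IH B hB)
    · push_neg at hmin
      by_cases hsucc : ∃ y, y < x ∧ ∀ z, z < x → z ≤ y
      · -- successor level
        obtain ⟨y, hyx, hmax⟩ := hsucc
        have hUxy : ∀ z : B ⊕ O, z ∈ USet x ↔ z = Sum.inr y ∨ z ∈ USet y := by
          rintro (b | w)
          · simp [inl_mem_USet]
          · rw [inr_mem_USet]
            constructor
            · intro hw
              rcases eq_or_lt_of_le (hmax w hw) with h | h
              · exact Or.inl (by rw [h])
              · exact Or.inr (inr_mem_USet.2 h)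
            · rintro (h | h)
              · rw [Sum.inr.injEq] at h
                rw [h]; exact hyx
              · exact lt_trans (inr_mem_USet.1 h) hyx
        have LxChar : L x = {f | (∀ m, f m ∈ USet x) ∧ ∃ m, f m = Sum.inr y} := by
          ext f
          constructor
          · intro hf
            have hx : lev f = x := hf
            have h1 : ∀ m, f m ∈ USet x := fun m => hx ▸ lev_mem f m
            refine ⟨h1, ?_⟩
            by_contra hc
            push_neg at hc
            refine lev_min f y (hx ▸ hyx) fun m => ?_
            rcases (hUxy (f m)).1 (h1 m) with h | h
            · exact absurd h (hc m)
            · exact h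
          · rintro ⟨h1, m₀, hm₀⟩
            refine lev_eq f x h1 fun z hz hall => ?_
            have := hall m₀
            rw [hm₀, inr_mem_USet] at this
            exact absurd this (not_lt.2 (hmax z hz))
        set K : ℕ → Set (ℕ → B ⊕ O) := fun j =>
          {f | f j = Sum.inr y ∧ ∀ i, i ≠ j → f i ∈ (if i < j then USet y else USet x)}
          with hKdef
        have hKsides : ∀ i j : ℕ, #(↥(if i < j then (USet y : Set (B ⊕ O)) else USet x))
            = Cardinal.aleph n := by
          intro i j
          split <;> exact hU _
        have hKhomeo : ∀ j, ↥(K j) ≃ₜ (ℕ → B) := fun j =>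
          (deleteHomeo j (Sum.inr y) (fun i => if i < j then USet y else USet x)).trans
            (boxHomeo _ (fun i => equivOfCard (hB.trans (hKsides (skips j i) j).symm)))
        have hKsub : ∀ j, K j ⊆ L x := by
          intro j f hf
          rw [LxChar]
          refine ⟨?_, ⟨j, hf.1⟩⟩
          intro m
          by_cases hm : m = j
          · rw [hm, hf.1, inr_mem_USet]; exact hyx
          · have := hf.2 m hm
            split at this
            · exact USet_mono hyx.le this
            · exact this
        have hKdisj : ∀ j j' : ℕ, j < j' → Disjoint (K j) (K j') := by
          intro j j' hjj
          rw [Set.disjoint_left]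
          intro f hf hf'
          have h1 : f j = Sum.inr y := hf.1
          have h2 := hf'.2 j (by omega)
          rw [if_pos hjj, h1, inr_mem_USet] at h2
          exact lt_irrefl y h2
        have hKcov : L x = ⋃ j, K j := by
          ext f
          constructor
          · intro hf
            rw [LxChar] at hf
            obtain ⟨h1, hex⟩ := hf
            refine Set.mem_iUnion.2 ⟨Nat.find hex, Nat.find_spec hex, ?_⟩
            intro i hi
            by_cases hlt : i < Nat.find hex
            · rw [if_pos hlt]
              rcases (hUxy (f i)).1 (h1 i) with h | h
              · exact absurd h (Nat.find_min hex hlt)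
              · exact h
            · rw [if_neg hlt]; exact h1 i
          · intro hf
            obtain ⟨j, hj⟩ := Set.mem_iUnion.1 hf
            exact hKsub j hj
        have hKP : ∀ j : ℕ, ∃ P : B → Set (ℕ → B ⊕ O), IsBairePartition P (K j) := fun j =>
          partitionOfHomeo _ (hKhomeo j) (IH B hB)
        choose KP hKPp using hKP
        have hQ : IsBairePartition (fun p : ℕ × B => KP p.1 p.2) (L x) := by
          refine ⟨?_, fun p => (hKPp p.1).2.1 p.2, ?_, fun p => (hKPp p.1).2.2.2 p.2⟩
          · intro p q hpq
            by_cases hj : p.1 = q.1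
            · have hb : p.2 ≠ q.2 := fun h => hpq (Prod.ext hj h)
              show Disjoint (KP p.1 p.2) (KP q.1 q.2)
              rw [hj]
              exact (hKPp q.1).1 hb
            · rcases Nat.lt_or_ge p.1 q.1 with h | h
              · exact Set.disjoint_of_subset (subset_of_partition (hKPp p.1) p.2)
                  (subset_of_partition (hKPp q.1) q.2) (hKdisj _ _ h)
              · have h' : q.1 < p.1 := by omega
                exact Set.disjoint_of_subset (subset_of_partition (hKPp p.1) p.2)
                  (subset_of_partition (hKPp q.1) q.2) (hKdisj _ _ h').symm
          · rw [hKcov]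
            ext f
            simp only [Set.mem_iUnion]
            constructor
            · rintro ⟨p, hp⟩
              exact ⟨p.1, subset_of_partition (hKPp p.1) p.2 hp⟩
            · rintro ⟨j, hj⟩
              have : f ∈ ⋃ b, KP j b := by rw [(hKPp j).2.2.1]; exact hj
              obtain ⟨b, hb⟩ := Set.mem_iUnion.1 this
              exact ⟨(j, b), hb⟩
        have hcard : #B = #(ℕ × B) := by
          simp only [Cardinal.mk_prod, Cardinal.mk_nat, Cardinal.lift_aleph0, Cardinal.lift_id']
          exact (Cardinal.mul_eq_right (by rw [hB]; exact Cardinal.aleph0_le_aleph _)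
            (by rw [hB]; exact (Cardinal.aleph0_le_aleph _)) Cardinal.aleph0_ne_zero).symm
        exact ⟨_, reindexPartition (equivOfCard hcard) hQ⟩
      · -- limit level
        obtain ⟨f₀, hf₀mem⟩ := hne
        have hf₀ : lev f₀ = x := hf₀mem
        have h1₀ : ∀ m, f₀ m ∈ USet x := fun m => hf₀ ▸ lev_mem f₀ m
        obtain ⟨y₀, hy₀⟩ := hmin
        push_neg at hsucc
        have hnomaxx : ∀ y, y < x → ∃ z, z < x ∧ y < z := by
          intro y hy
          obtain ⟨z, hz1, hz2⟩ := hsucc y hy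
          exact ⟨z, hz1, hz2⟩
        have unbddWitness : ∀ y, y < x → ∃ m w, f₀ m = Sum.inr w ∧ y ≤ w ∧ w < x := by
          intro y hy
          have hh := lev_min f₀ y (hf₀ ▸ hy)
          push_neg at hh
          obtain ⟨m, hm⟩ := hh
          rcases hz : f₀ m with b | w
          · exact absurd (hz ▸ inl_mem_USet b y) hm
          · refine ⟨m, w, hz, ?_, ?_⟩
            · by_contra hc
              push_neg at hc
              exact hm (hz ▸ inr_mem_USet.2 hc)
            · have := h1₀ m
              rw [hz, inr_mem_USet] at this
              exact this
        set η : ℕ → O := fun m => match f₀ m with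
          | Sum.inl _ => y₀
          | Sum.inr w => if w < x then w else y₀ with hηdef
        have hηx : ∀ m, η m < x := by
          intro m
          rcases hfm : f₀ m with b | w <;> simp only [hηdef, hfm]
          · exact hy₀
          · split
            · assumption
            · exact hy₀
        have hηw : ∀ m w, f₀ m = Sum.inr w → w < x → η m = w := by
          intro m w hm hw
          simp only [hηdef, hm]
          rw [if_pos hw]
        set ζ : ℕ → O := fun k => Nat.rec (η 0) (fun k ih => max ih (η (k+1))) k with hζdef
        have hζ0 : ζ 0 = η 0 := rfl
        have hζs : ∀ k, ζ (k+1) = max (ζ k) (η (k+1)) := fun k => rfl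
        have hζmono : Monotone ζ :=
          monotone_nat_of_le_succ (fun k => by rw [hζs]; exact le_max_left _ _)
        have hζx : ∀ k, ζ k < x := by
          intro k
          induction k with
          | zero => rw [hζ0]; exact hηx 0
          | succ k ih => rw [hζs]; exact max_lt ih (hηx (k+1))
        have hηζ : ∀ m, η m ≤ ζ m := by
          intro m
          cases m with
          | zero => rw [hζ0]
          | succ m => rw [hζs]; exact le_max_right _ _
        have hζcof : ∀ y, y < x → ∃ k, y ≤ ζ k := by
          intro y hy
          obtain ⟨m, w, hm, hyw, hwx⟩ := unbddWitness y hy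
          exact ⟨m, (hyw.trans_eq (hηw m w hm hwx).symm).trans (hηζ m)⟩
        have hUsub : ∀ k, (USet (ζ k) : Set (B ⊕ O)) ⊆ USet x := fun k => USet_mono (hζx k).le
        have hcovζ : ∀ z : B ⊕ O, z ∈ USet x → ∃ k, z ∈ USet (ζ k) := by
          rintro (b | w) hz
          · exact ⟨0, inl_mem_USet b _⟩
          · obtain ⟨w', hw'x, hww'⟩ := hnomaxx w (inr_mem_USet.1 hz)
            obtain ⟨k, hk⟩ := hζcof w' hw'x
            exact ⟨k, inr_mem_USet.2 (lt_of_lt_of_le hww' hk)⟩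
        set r : ↥(USet x : Set (B ⊕ O)) → ℕ := fun d => Nat.find (hcovζ d.1 d.2) with hrdef
        have hrle : ∀ (d : ↥(USet x : Set (B ⊕ O))) (k : ℕ), r d ≤ k ↔ d.1 ∈ USet (ζ k) := by
          intro d k
          constructor
          · intro h
            exact USet_mono (hζmono h) (Nat.find_spec (hcovζ d.1 d.2))
          · intro h
            exact Nat.find_le h
        have LxChar : L x = {f | (∀ m, f m ∈ USet x) ∧ ∀ k, ∃ m, f m ∉ USet (ζ k)} := by
          ext f
          constructor
          · intro hf
            have hx : lev f = x := hf
            refine ⟨fun m => hx ▸ lev_mem f m, fun k => ?_⟩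
            have := lev_min f (ζ k) (hx ▸ hζx k)
            push_neg at this
            exact this
          · rintro ⟨h1, h2⟩
            refine lev_eq f x h1 fun z hz hall => ?_
            obtain ⟨k, hk⟩ := hζcof z hz
            obtain ⟨m, hm⟩ := h2 k
            exact hm (USet_mono hk (hall m))
        have hDcard : #(↥(USet x : Set (B ⊕ O))) = Cardinal.aleph n := hU x
        haveI : Infinite (↥(USet x : Set (B ⊕ O))) :=
          Cardinal.infinite_iff.2 (by rw [hDcard]; exact Cardinal.aleph0_le_aleph _)
        have hrub : ∀ K : ℕ, ∃ d : ↥(USet x : Set (B ⊕ O)), K < r d := by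
          intro K
          refine ⟨⟨Sum.inr (ζ K), inr_mem_USet.2 (hζx K)⟩, ?_⟩
          by_contra hc
          push_neg at hc
          have := (hrle _ K).1 hc
          exact lt_irrefl (ζ K) (inr_mem_USet.1 this)
        have hVcard : ∀ s : List (Blk ↥(USet x : Set (B ⊕ O))),
            #(↥(blockV r s)) = Cardinal.aleph n := by
          intro s
          apply le_antisymm
          · calc #(↥(blockV r s)) ≤ #(Blk ↥(USet x : Set (B ⊕ O))) := Cardinal.mk_set_le _
              _ = #(↥(USet x : Set (B ⊕ O)) × List ↥(USet x : Set (B ⊕ O))) :=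
                Cardinal.mk_congr ⟨fun e => (e.hd, e.wd), fun p => ⟨p.1, p.2⟩,
                  fun e => rfl, fun p => rfl⟩
              _ = Cardinal.aleph n := by
                rw [Cardinal.mk_prod, Cardinal.lift_id, Cardinal.lift_id,
                  Cardinal.mk_list_eq_mk, hDcard]
                exact Cardinal.mul_eq_self (Cardinal.aleph0_le_aleph _)
          · set Ms : ℕ := s.getLast?.elim 0 (fun p => r p.hd) with hMs
            obtain ⟨d₀, hd₀⟩ := hrub Ms
            set W : Set (↥(USet x : Set (B ⊕ O))) := {d | r d ≤ r d₀} with hW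
            have hWcard : #(↥W) = Cardinal.aleph n := by
              rw [← hU (ζ (r d₀))]
              apply Cardinal.mk_congr
              exact ⟨fun w => ⟨w.1.1, (hrle w.1 (r d₀)).1 w.2⟩,
                fun u => ⟨⟨u.1, hUsub _ u.2⟩, (hrle _ _).2 u.2⟩,
                fun w => Subtype.ext (Subtype.ext rfl), fun u => Subtype.ext rfl⟩
            haveI : Infinite ↥W := Cardinal.infinite_iff.2
              (by rw [hWcard]; exact Cardinal.aleph0_le_aleph _)
            have hmemV : ∀ l : List ↥W,
                (⟨d₀, l.map Subtype.val⟩ : Blk ↥(USet x : Set (B ⊕ O))) ∈ blockV r s := by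
              intro l
              constructor
              · intro z hz
                rw [List.mem_map] at hz
                obtain ⟨w, hw, rfl⟩ := hz
                exact w.2
              · intro p hp
                rcases hlast : s.getLast? with _ | p'
                · rw [hlast] at hp; exact absurd hp (by simp)
                · rw [hlast] at hp
                  have hpp : p' = p := by simpa using hp
                  have : Ms = r p.hd := by rw [hMs, hlast, hpp]; rfl
                  show r p.hd < r d₀
                  omega
            calc Cardinal.aleph n = #(List ↥W) := by rw [Cardinal.mk_list_eq_mk, hWcard]
              _ ≤ #(↥(blockV r s)) := by
                apply Cardinal.mk_le_of_injective
                  (f := fun l : List ↥W => (⟨⟨d₀, l.map Subtype.val⟩, hmemV l⟩ : ↥(blockV r s)))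
                intro l l' he
                rw [Subtype.mk.injEq] at he
                have := congrArg Blk.wd he
                exact List.map_injective_iff.2 Subtype.val_injective this
        have eqsB : ∀ s : List (Blk ↥(USet x : Set (B ⊕ O))), B ≃ ↥(blockV r s) :=
          fun s => equivOfCard (hB.trans (hVcard s).symm)
        have hsetEq : {g : ℕ → ↥(USet x : Set (B ⊕ O)) |
            (fun f : ℕ → B ⊕ O => ∀ k, ∃ m, f m ∉ USet (ζ k)) (fun m => (g m : B ⊕ O))}
            = unbSet r := by
          ext g
          simp only [Set.mem_setOf_eq, unbSet]
          constructor
          · intro h k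
            obtain ⟨m, hm⟩ := h k
            refine ⟨m, ?_⟩
            have : ¬ r (g m) ≤ k := fun hc => hm ((hrle (g m) k).1 hc)
            omega
          · intro h k
            obtain ⟨m, hm⟩ := h (k+1)
            refine ⟨m, fun hmem => ?_⟩
            have := (hrle (g m) k).2 hmem
            omega
        have bigHomeo : ↥(L x) ≃ₜ (ℕ → B) :=
          ((((Homeomorph.setCongr LxChar).trans
            (corestrictHomeo (USet x) (fun f => ∀ k, ∃ m, f m ∉ USet (ζ k)))).trans
            (Homeomorph.setCongr hsetEq)).trans
            (blockHomeo r)).trans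
            (treeHomeo (blockV r) eqsB).symm
        exact partitionOfHomeo _ bigHomeo (IH B hB)
  obtain ⟨T, hT⟩ := gluePartition L Ldisj Lcov perLevel
  refine ⟨_, T, hT, ?_, ?_⟩
  · -- #O ≤ #(NE × B)
    set sA : O → O := fun y => WellFounded.min wellFounded_lt {z | y < z} (hnomax y) with hsAdef
    have hsA1 : ∀ y, y < sA y := fun y => WellFounded.min_mem wellFounded_lt {z | y < z} (hnomax y)
    have hsA2 : ∀ y z, y < z → sA y ≤ z := by
      intro y z hz
      by_contra hc
      push_neg at hc
      exact WellFounded.not_lt_min wellFounded_lt {z | y < z} hz hc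
    have hsANE : ∀ y : O, (L (sA y)).Nonempty := by
      intro y
      refine ⟨fun _ => Sum.inr y, ?_⟩
      show lev _ = sA y
      apply lev_eq
      · intro m
        exact inr_mem_USet.2 (hsA1 y)
      · intro z hz hall
        have := inr_mem_USet.1 (hall 0)
        exact absurd hz (not_lt.2 (hsA2 y z this))
    have hsAinj : Function.Injective sA := by
      intro y y' he
      by_contra hne'
      rcases lt_or_gt_of_ne hne' with h | h
      · have h2 := hsA2 y y' h
        have h3 := hsA1 y'
        rw [he] at h2
        exact absurd (h2.trans_lt h3) (lt_irrefl _)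
      · have h2 := hsA2 y' y h
        have h3 := hsA1 y
        rw [← he] at h2
        exact absurd (h2.trans_lt h3) (lt_irrefl _)
    exact Cardinal.mk_le_of_injective (f := fun y : O =>
      ((⟨sA y, hsANE y⟩, Classical.arbitrary B) : {x : O // (L x).Nonempty} × B))
      (fun y y' he => hsAinj (congrArg (fun p => p.1.1) he))
  · calc #({x : O // (L x).Nonempty} × B)
        = #{x : O // (L x).Nonempty} * #B := by
          rw [Cardinal.mk_prod, Cardinal.lift_id, Cardinal.lift_id]
      _ ≤ #O * Cardinal.aleph n := by
          rw [hB]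
          exact mul_le_mul_left (Cardinal.mk_subtype_le _) _

end SumPart

section Main

lemma transferAll {A A' : Type u} [TopologicalSpace A] [DiscreteTopology A]
    [TopologicalSpace A'] [DiscreteTopology A'] (e : A' ≃ A) {I : Type u}
    (T : I → Set (ℕ → A')) (hT : IsBairePartition T Set.univ) (eI : A ≃ I) :
    ∃ S : A → Set (ℕ → A), IsBairePartition S Set.univ := by
  have hpi : ↥(Set.univ : Set (ℕ → A)) ≃ₜ (ℕ → A') :=
    (Homeomorph.Set.univ _).trans
      (Homeomorph.piCongrRight (fun _ => (Equiv.toHomeomorphDiscrete e.symm)))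
  obtain ⟨T', hT'⟩ := transportPartition hpi hT
  exact ⟨fun a => T' (eI a), reindexPartition eI hT'⟩

lemma baseCase (A : Type u) [TopologicalSpace A] [DiscreteTopology A]
    (hA : #A = Cardinal.aleph 0) :
    ∃ S : A → Set (ℕ → A), IsBairePartition S Set.univ := by
  have hAN : Nonempty (A ≃ ℕ) := by
    rw [← Cardinal.lift_mk_eq']
    rw [hA, Cardinal.mk_nat, Cardinal.aleph_zero, Cardinal.lift_aleph0, Cardinal.lift_aleph0]
  obtain ⟨eN⟩ := hAN
  haveI : Nonempty A := ⟨eN.symm 0⟩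
  refine ⟨fun a => {f | f 0 = a}, ?_, fun a => ⟨fun _ => a, rfl⟩, ?_, ?_⟩
  · intro a b hab
    rw [Function.onFun, Set.disjoint_left]
    intro f hf hg
    exact hab ((show f 0 = a from hf) ▸ (show f 0 = b from hg) ▸ rfl)
  · exact Set.eq_univ_of_forall (fun f => Set.mem_iUnion.2 ⟨f 0, rfl⟩)
  · intro a
    have hset : {f : ℕ → A | f 0 = a}
        = {f | f 0 = a ∧ ∀ i, i ≠ 0 → f i ∈ (fun _ : ℕ => (Set.univ : Set A)) i} := by
      ext f; simp
    have h : ↥{f : ℕ → A | f 0 = a} ≃ₜ (ℕ → ℕ) :=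
      ((Homeomorph.setCongr hset).trans (deleteHomeo 0 a (fun _ => Set.univ))).trans
        (boxHomeo (B := ℕ) (fun _ => (Set.univ : Set A))
          (fun _ => eN.symm.trans (Equiv.Set.univ A).symm))
    exact ⟨h⟩

lemma stepCase (n : ℕ)
    (IH : ∀ (C : Type u) [TopologicalSpace C] [DiscreteTopology C], #C = Cardinal.aleph n →
      ∃ S : C → Set (ℕ → C), IsBairePartition S Set.univ)
    (A : Type u) [TopologicalSpace A] [DiscreteTopology A]
    (hA : #A = Cardinal.aleph (n+1)) :
    ∃ S : A → Set (ℕ → A), IsBairePartition S Set.univ := by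
  classical
  have halephsucc : (Cardinal.aleph ((↑n : Ordinal) + 1) : Cardinal.{u})
      = Order.succ (Cardinal.aleph (↑n : Ordinal)) := by
    rw [Ordinal.add_one_eq_succ, Cardinal.aleph_succ]
  have halephle : (Cardinal.aleph (↑n : Ordinal) : Cardinal.{u})
      ≤ Cardinal.aleph ((↑n : Ordinal) + 1) := by
    rw [Cardinal.aleph_le_aleph]
    exact_mod_cast Nat.le_succ n
  set B : Type u := (Cardinal.aleph (↑n : Ordinal) : Cardinal.{u}).ord.ToType with hBdef
  letI : TopologicalSpace B := ⊥
  haveI : DiscreteTopology B := ⟨rfl⟩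
  have hB : #B = Cardinal.aleph (↑n : Ordinal) := by
    rw [hBdef, Cardinal.mk_toType, Cardinal.card_ord]
  set O : Type u := (Cardinal.aleph ((↑n : Ordinal) + 1) : Cardinal.{u}).ord.ToType with hOdef
  have hO : #O = Cardinal.aleph ((↑n : Ordinal) + 1) := by
    rw [hOdef, Cardinal.mk_toType, Cardinal.card_ord]
  letI : TopologicalSpace (B ⊕ O) := ⊥
  haveI : DiscreteTopology (B ⊕ O) := ⟨rfl⟩
  have hreg : (Cardinal.aleph ((↑n : Ordinal) + 1) : Cardinal.{u}).IsRegular := by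
    rw [halephsucc]
    exact Cardinal.isRegular_succ (Cardinal.aleph0_le_aleph _)
  have hIio : ∀ x : O, #(Set.Iio x) < Cardinal.aleph ((↑n : Ordinal) + 1) := fun x =>
    Cardinal.mk_Iio_ord_toType x
  have hIio' : ∀ x : O, #(Set.Iio x) ≤ Cardinal.aleph (↑n : Ordinal) := by
    intro x
    exact Order.lt_succ_iff.1 (lt_of_lt_of_eq (hIio x) halephsucc)
  have hnomax : ∀ x : O, ∃ y, x < y := by
    intro x
    by_contra hc
    push_neg at hc
    have huniv : (Set.univ : Set O) = insert x (Set.Iio x) := by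
      ext z
      simp only [Set.mem_univ, true_iff, Set.mem_insert_iff, Set.mem_Iio]
      rcases lt_or_eq_of_le (hc z) with h | h
      · exact Or.inr h
      · exact Or.inl h
    have heq : #O = #(↥(insert x (Set.Iio x))) := by
      rw [← huniv, Cardinal.mk_univ]
    have hlt : #(↥(insert x (Set.Iio x))) < Cardinal.aleph ((↑n : Ordinal) + 1) := by
      apply lt_of_le_of_lt Cardinal.mk_insert_le
      exact Cardinal.add_lt_of_lt (Cardinal.aleph0_le_aleph _) (hIio x)
        (lt_of_lt_of_le Cardinal.one_lt_aleph0 (Cardinal.aleph0_le_aleph _))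
    rw [← heq, hO] at hlt
    exact lt_irrefl _ hlt
  have hcov : ∀ f : ℕ → B ⊕ O, ∃ x : O, ∀ m, f m ∈ USet x := by
    intro f
    set iso := Ordinal.ToType.mk (o := (Cardinal.aleph ((↑n : Ordinal) + 1) : Cardinal.{u}).ord)
      with hiso
    set os : ℕ → Ordinal := fun m => match f m with
      | Sum.inl _ => 0
      | Sum.inr w => (iso.symm w).1 + 1 with hos
    have hoslt : ∀ m, os m < (Cardinal.aleph ((↑n : Ordinal) + 1) : Cardinal.{u}).ord := by
      intro m
      rcases hfm : f m with b | w <;> simp only [hos, hfm]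
      · exact (Cardinal.isSuccLimit_ord (Cardinal.aleph0_le_aleph _)).pos
      · rw [Ordinal.add_one_eq_succ]
        exact (Cardinal.isSuccLimit_ord (Cardinal.aleph0_le_aleph _)).succ_lt (iso.symm w).2
    have hsuplt : (⨆ m, os m) < (Cardinal.aleph ((↑n : Ordinal) + 1) : Cardinal.{u}).ord := by
      apply Ordinal.iSup_lt_ord_lift ?_ hoslt
      rw [Cardinal.IsRegular.cof_eq hreg]
      rw [Cardinal.mk_nat, Cardinal.lift_aleph0]
      rw [← Cardinal.aleph_zero, Cardinal.aleph_lt_aleph]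
      exact lt_of_le_of_lt (zero_le (a := _))
        (by rw [Ordinal.add_one_eq_succ]; exact Order.lt_succ _)
    refine ⟨iso ⟨_, hsuplt⟩, fun m => ?_⟩
    rcases hfm : f m with b | w
    · exact inl_mem_USet b _
    · apply inr_mem_USet.2
      have h1 : (iso.symm w).1 < ⨆ m, os m := by
        have hosm : os m = (iso.symm w).1 + 1 := by simp [hos, hfm]
        calc (iso.symm w).1 < os m := by
              rw [hosm]
              exact lt_of_lt_of_eq (Order.lt_succ _) (Ordinal.add_one_eq_succ _).symm
          _ ≤ ⨆ m, os m := Ordinal.le_iSup os m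
      have h2 : iso.symm w < ⟨_, hsuplt⟩ := Subtype.coe_lt_coe.1 h1
      have h3 := iso.lt_iff_lt.2 h2
      rwa [OrderIso.apply_symm_apply] at h3
  have hU : ∀ x : O, #(USet x : Set (B ⊕ O)) = Cardinal.aleph (↑n : Ordinal) := by
    intro x
    have h1 : #(↥(Sum.inl '' Set.univ : Set (B ⊕ O))) = Cardinal.aleph (↑n : Ordinal) := by
      rw [Cardinal.mk_image_eq Sum.inl_injective, Cardinal.mk_univ, hB]
    apply le_antisymm
    · rw [USet_eq_union]
      apply le_trans (Cardinal.mk_union_le _ _)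
      have h2 : #(↥(Sum.inr '' Set.Iio x : Set (B ⊕ O))) ≤ Cardinal.aleph (↑n : Ordinal) := by
        rw [Cardinal.mk_image_eq Sum.inr_injective]
        exact hIio' x
      calc #(↥(Sum.inl '' Set.univ : Set (B ⊕ O))) + #(↥(Sum.inr '' Set.Iio x : Set (B ⊕ O)))
          ≤ Cardinal.aleph (↑n : Ordinal) + Cardinal.aleph (↑n : Ordinal) :=
            add_le_add h1.le h2
        _ = Cardinal.aleph (↑n : Ordinal) := Cardinal.add_eq_self (Cardinal.aleph0_le_aleph _)
    · have hsub : (Sum.inl '' Set.univ : Set (B ⊕ O)) ⊆ USet x := by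
        rintro z ⟨b, _, rfl⟩
        exact inl_mem_USet b x
      calc Cardinal.aleph (↑n : Ordinal) = #(↥(Sum.inl '' Set.univ : Set (B ⊕ O))) := h1.symm
        _ ≤ #(USet x : Set (B ⊕ O)) := Cardinal.mk_le_mk_of_subset hsub
  obtain ⟨I, T, hT, hI1, hI2⟩ := sumPartition n B O hB hcov hU hnomax IH
  have hIcard : #I = Cardinal.aleph ((↑n : Ordinal) + 1) := by
    apply le_antisymm
    · apply le_trans hI2
      rw [hO]
      exact le_of_eq (Cardinal.mul_eq_left (Cardinal.aleph0_le_aleph _) halephle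
        (Cardinal.aleph_pos _).ne')
    · rw [← hO]; exact hI1
  have hAA' : Nonempty ((B ⊕ O) ≃ A) := Cardinal.eq.1 (by
    rw [Cardinal.mk_sum, Cardinal.lift_id, Cardinal.lift_id, hB, hO, hA]
    exact Cardinal.add_eq_right (Cardinal.aleph0_le_aleph _) halephle)
  have hAI : Nonempty (A ≃ I) := Cardinal.eq.1 (by rw [hA, hIcard])
  obtain ⟨e⟩ := hAA'
  obtain ⟨eI⟩ := hAI
  exact transferAll e T hT eI

theorem mainThm (n : ℕ) : ∀ (A : Type u) [TopologicalSpace A] [DiscreteTopology A],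
    Cardinal.mk A = Cardinal.aleph n → ∃ S : A → Set (ℕ → A), IsBairePartition S Set.univ := by
  induction n with
  | zero => exact fun A _ _ hA => baseCase A hA
  | succ n IH => exact fun A _ _ hA => stepCase n IH A (by rw [Nat.cast_succ] at hA; exact hA)

end Main

/-- For every `n < ω`, the space ω_n^ω can be partitioned into ℵ_n pairwise disjoint
subsets, each homeomorphic to the Baire space ω^ω. -/
theorem stmt_5 (n : ℕ) (A : Type*) [TopologicalSpace A] [DiscreteTopology A]
    (hA : Cardinal.mk A = Cardinal.aleph n) :
    ∃ S : A → Set (ℕ → A), Pairwise (Function.onFun Disjoint S) ∧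
      (∀ a, (S a).Nonempty) ∧ (⋃ a, S a) = Set.univ ∧
      ∀ a, Nonempty (S a ≃ₜ (ℕ → ℕ)) := by
  obtain ⟨S, h1, h2, h3, h4⟩ := mainThm n A hA
  exact ⟨S, h1, h2, h3, h4⟩
end

section
/- If κ is an uncountable cardinal of cofinality ω, then κ^ω is not the union of κ many subspaces each homeomorphic to the Baire space ω^ω. -/
open Set Cardinal Ordinal TopologicalSpace

/-- The range of a continuous map from a separable space to a discrete space is countable. -/
lemma countable_range_discrete_aux {X A : Type*} [TopologicalSpace X]
    [TopologicalSpace.SeparableSpace X] [TopologicalSpace A] [DiscreteTopology A]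
    {f : X → A} (hf : Continuous f) : (Set.range f).Countable := by
  obtain ⟨s, hs, hd⟩ := TopologicalSpace.exists_countable_dense X
  refine (hs.image f).mono ?_
  rintro _ ⟨x, rfl⟩
  have hx : f x ∈ f '' closure s := ⟨x, hd x, rfl⟩
  have := image_closure_subset_closure_image hf hx
  rwa [(isClosed_discrete (f '' s)).closure_eq] at this

/-- If κ is an uncountable cardinal of cofinality ω, then κ^ω is not the union of κ many
subspaces each homeomorphic to the Baire space ω^ω. -/
theorem stmt_6 (A : Type*) [TopologicalSpace A] [DiscreteTopology A]
    (hunc : Cardinal.aleph0 < Cardinal.mk A)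
    (hcof : (Cardinal.mk A).ord.cof = Cardinal.aleph0) :
    ¬ ∃ X : A → Set (ℕ → A), (∀ a, Nonempty (X a ≃ₜ (ℕ → ℕ))) ∧ (⋃ a, X a) = Set.univ := by
  rintro ⟨X, hX, hcover⟩
  -- Step 1: for each `a`, all coordinates of members of `X a` lie in a countable set `S a`.
  have hS : ∀ a : A, ∃ S : Set A, S.Countable ∧ ∀ g ∈ X a, ∀ n, g n ∈ S := by
    intro a
    obtain ⟨e⟩ := hX a
    refine ⟨⋃ n, Set.range (fun y : ℕ → ℕ => (e.symm y : ℕ → A) n), ?_, ?_⟩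
    · exact Set.countable_iUnion fun n => countable_range_discrete_aux
        (((continuous_apply n).comp continuous_subtype_val).comp e.symm.continuous)
    · intro g hg n
      refine Set.mem_iUnion.2 ⟨n, ⟨e ⟨g, hg⟩, ?_⟩⟩
      simp
  choose S hSc hSm using hS
  set κ := Cardinal.mk A with hκ
  -- Step 2: decompose `A` into countably many pieces of size `< κ`.
  obtain ⟨eA⟩ : Nonempty (A ≃ κ.ord.ToType) := Cardinal.eq.1 (by rw [mk_ord_toType])
  letI : IsWellOrder κ.ord.ToType (· < ·) := isWellOrder_lt
  have hlim : Order.IsSuccLimit (Ordinal.type ((· < ·) : κ.ord.ToType → κ.ord.ToType → Prop)) := by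
    rw [type_toType]; exact Cardinal.isSuccLimit_ord hunc.le
  obtain ⟨U, hU, hUcard⟩ :=
    Ordinal.cof_eq' ((· < ·) : κ.ord.ToType → κ.ord.ToType → Prop) hlim
  rw [type_toType] at hUcard
  have hUκ : #U = ℵ₀ := by rw [hUcard, hcof]
  have hUcount : U.Countable :=
    Set.countable_coe_iff.1 (Cardinal.mk_le_aleph0_iff.1 hUκ.le)
  have hUne : U.Nonempty := by
    rw [← Set.nonempty_coe_sort, ← Cardinal.mk_ne_zero_iff, hUκ]
    exact Cardinal.aleph0_ne_zero
  obtain ⟨g, hg⟩ := hUcount.exists_surjective hUne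
  set B : ℕ → Set A := fun n => {a : A | eA a < (g n : κ.ord.ToType)} with hB
  have hBcard : ∀ n, #(B n) < κ := by
    intro n
    have h1 : #(B n) ≤ #(Set.Iio ((g n : U) : κ.ord.ToType)) := by
      refine Cardinal.mk_le_of_injective (f := fun x : B n => ⟨eA x, x.2⟩) ?_
      intro x y hxy
      apply Subtype.ext
      exact eA.injective (by simpa using congrArg Subtype.val hxy)
    exact h1.trans_lt (Cardinal.mk_Iio_ord_toType _)
  have hBcover : ∀ a : A, ∃ n, a ∈ B n := by
    intro a
    obtain ⟨b, hb, hab⟩ := hU (eA a)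
    obtain ⟨n, hn⟩ := hg ⟨b, hb⟩
    exact ⟨n, by simp only [hB, Set.mem_setOf_eq, hn]; exact hab⟩
  -- Step 3: diagonalize.
  set T : ℕ → Set A := fun n => ⋃ x ∈ B n, S x with hT
  have hTcard : ∀ n, #(T n) < κ := by
    intro n
    have h1 : #(T n) ≤ #(B n) * ⨆ x : B n, #(S x.1) := Cardinal.mk_biUnion_le S (B n)
    have h2 : (⨆ x : B n, #(S x.1)) ≤ ℵ₀ :=
      ciSup_le' fun x => Cardinal.mk_le_aleph0_iff.2 (hSc x.1)
    calc #(T n) ≤ #(B n) * ℵ₀ := h1.trans (mul_le_mul_right h2 _)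
      _ < κ := Cardinal.mul_lt_of_lt hunc.le (hBcard n) hunc
  have hTex : ∀ n, ∃ y : A, y ∉ T n := by
    intro n
    by_contra h
    push_neg at h
    have : (Set.univ : Set A) ⊆ T n := fun y _ => h y
    have := (Cardinal.mk_le_mk_of_subset this).trans_lt (hTcard n)
    simp [Cardinal.mk_univ] at this
    exact lt_irrefl _ this
  choose fb hfb using hTex
  have hmem : fb ∈ ⋃ a, X a := hcover ▸ Set.mem_univ _
  obtain ⟨a, ha⟩ := Set.mem_iUnion.1 hmem
  obtain ⟨n, hn⟩ := hBcover a
  exact hfb n (Set.mem_biUnion hn (hSm a fb ha n))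
end

section
/- If the Cantor space 2^ω can be partitioned into κ many nonempty closed sets, then 2^ω can be partitioned into κ many pairwise disjoint subsets each homeomorphic to 2^ω. -/
noncomputable section Stmt14Aux

namespace Stmt14

open Function

attribute [local instance] Classical.propDecidable

/-- A `Bool`-valued function that depends only on finitely many continuous `Bool`-valued
observations is continuous. -/
theorem continuous_of_finite_obs {X : Type*} [TopologicalSpace X] (g : X → Bool)
    (M : ℕ) (obs : ℕ → X → Bool) (hobs : ∀ i, Continuous (obs i))
    (h : ∀ a b, (∀ i < M, obs i a = obs i b) → g a = g b) : Continuous g := by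
  classical
  set res : X → (Fin M → Bool) := fun a i => obs i a with hres_def
  have hres : Continuous res := continuous_pi fun i => hobs i
  have hg : g = (fun u : Fin M → Bool =>
      if hu : ∃ a, res a = u then g hu.choose else false) ∘ res := by
    funext a
    have hex : ∃ b, res b = res a := ⟨a, rfl⟩
    simp only [Function.comp_apply, dif_pos hex]
    exact (h hex.choose a fun i hi => congrFun hex.choose_spec ⟨i, hi⟩).symm
  rw [hg]
  exact continuous_of_discreteTopology.comp hres

/-! ### The tree of a set, and the canonical retraction -/

variable (A : Set (ℕ → Bool))

/-- The tree of `A` : there is an element of `A` agreeing with `u` on coordinates `< n`. -/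
def T (n : ℕ) (u : ℕ → Bool) : Prop := ∃ z ∈ A, ∀ k < n, z k = u k

theorem T_congr {n : ℕ} {u v : ℕ → Bool} (h : ∀ k < n, u k = v k) :
    T A n u → T A n v :=
  fun ⟨z, hz, hag⟩ => ⟨z, hz, fun k hk => (hag k hk).trans (h k hk)⟩

/-- Next-bit choice of the retraction: follow `b` if possible, else flip it. -/
def nb (n : ℕ) (u : ℕ → Bool) (b : Bool) : Bool :=
  if T A (n + 1) (Function.update u n b) then b else !b

/-- Prefixes of the retraction of `z` (values beyond the stage are junk `false`). -/
def pref (z : ℕ → Bool) : ℕ → (ℕ → Bool)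
  | 0 => fun _ => false
  | n + 1 => Function.update (pref z n) n (nb A n (pref z n) (z n))

/-- The canonical retraction onto (the closure of) `A`. -/
def r (z : ℕ → Bool) : ℕ → Bool := fun n => pref A z (n + 1) n

/-- The defect record: whether at step `n` we could follow `z`'s bit. -/
def d (z : ℕ → Bool) : ℕ → Bool := fun n =>
  if T A (n + 1) (Function.update (pref A z n) n (z n)) then true else false

theorem pref_lt {z : ℕ → Bool} : ∀ {n k : ℕ}, k < n → pref A z n k = r A z k := by
  intro n
  induction n with
  | zero => intro k hk; omega
  | succ n ih =>
    intro k hk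
    rcases Nat.lt_succ_iff_lt_or_eq.1 hk with hk' | rfl
    · show Function.update (pref A z n) n _ k = _
      rw [Function.update_of_ne (by omega)]
      exact ih hk'
    · rfl

theorem pref_dep {z z' : ℕ → Bool} : ∀ {n : ℕ}, (∀ k < n, z k = z' k) →
    pref A z n = pref A z' n := by
  intro n
  induction n with
  | zero => intro _; rfl
  | succ n ih =>
    intro h
    show Function.update (pref A z n) n _ = Function.update (pref A z' n) n _
    rw [ih (fun k hk => h k (by omega)), h n (by omega)]

theorem r_apply_dep {z z' : ℕ → Bool} {n : ℕ} (h : ∀ k < n + 1, z k = z' k) :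
    r A z n = r A z' n := by
  unfold r; rw [pref_dep A h]

theorem d_apply_dep {z z' : ℕ → Bool} {n : ℕ} (h : ∀ k < n + 1, z k = z' k) :
    d A z n = d A z' n := by
  unfold d
  rw [pref_dep A (fun k hk => h k (by omega)), h n (by omega)]

theorem T_r (hA : A.Nonempty) (z : ℕ → Bool) : ∀ n, T A n (r A z) := by
  intro n
  induction n with
  | zero => exact ⟨hA.choose, hA.choose_spec, by omega⟩
  | succ n ih =>
    have hsame : ∀ k < n, pref A z n k = r A z k := fun k hk => pref_lt A hk
    have hTs : T A n (pref A z n) := T_congr A (fun k hk => (hsame k hk).symm) ih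
    have hrn : r A z n = nb A n (pref A z n) (z n) := by
      show Function.update (pref A z n) n _ n = _
      rw [Function.update_self]
    by_cases hT : T A (n + 1) (Function.update (pref A z n) n (z n))
    · refine T_congr A (v := r A z) ?_ hT
      intro k hk
      rcases Nat.lt_succ_iff_lt_or_eq.1 hk with hk' | rfl
      · rw [Function.update_of_ne (by omega)]; exact hsame k hk'
      · rw [Function.update_self, hrn, nb, if_pos hT]
    · obtain ⟨w, hw, hagw⟩ := hTs
      have hTw : T A (n + 1) (Function.update (pref A z n) n (w n)) := by
        refine ⟨w, hw, fun k hk => ?_⟩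
        rcases Nat.lt_succ_iff_lt_or_eq.1 hk with hk' | rfl
        · rw [Function.update_of_ne (by omega)]; exact hagw k hk'
        · rw [Function.update_self]
      have hwn : w n = !z n := by
        have : w n ≠ z n := fun e => hT (e ▸ hTw)
        revert this; cases w n <;> cases z n <;> simp
      refine T_congr A (v := r A z) ?_ hTw
      intro k hk
      rcases Nat.lt_succ_iff_lt_or_eq.1 hk with hk' | rfl
      · rw [Function.update_of_ne (by omega)]; exact hsame k hk'
      · rw [Function.update_self, hrn, nb, if_neg hT, hwn]

theorem mem_of_T_all (hA : IsClosed A) {u : ℕ → Bool} (h : ∀ n, T A n u) : u ∈ A := by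
  choose f hfA hfa using h
  have htend : Filter.Tendsto f Filter.atTop (nhds u) := by
    rw [tendsto_pi_nhds]
    intro k
    have hev : ∀ᶠ n in Filter.atTop, f n k = u k :=
      Filter.eventually_atTop.2 ⟨k + 1, fun n hn => hfa n k (by omega)⟩
    exact Filter.Tendsto.congr' (hev.mono fun n hn => hn.symm) tendsto_const_nhds
  exact hA.mem_of_tendsto htend (Filter.Eventually.of_forall hfA)

theorem r_mem (hcl : IsClosed A) (hne : A.Nonempty) (z : ℕ → Bool) : r A z ∈ A :=
  mem_of_T_all A hcl (T_r A hne z)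

theorem r_eq_self {z : ℕ → Bool} (hz : z ∈ A) : r A z = z := by
  funext n
  induction n using Nat.strong_induction_on with
  | _ n ih =>
    have hpref : ∀ k < n, pref A z n k = z k := fun k hk => (pref_lt A hk).trans (ih k hk)
    have hT : T A (n + 1) (Function.update (pref A z n) n (z n)) := by
      refine ⟨z, hz, fun k hk => ?_⟩
      rcases Nat.lt_succ_iff_lt_or_eq.1 hk with hk' | rfl
      · rw [Function.update_of_ne (by omega)]; exact (hpref k hk').symm
      · rw [Function.update_self]
    show Function.update (pref A z n) n _ n = _
    rw [Function.update_self, nb, if_pos hT]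

/-- Decoding map. -/
def psi (x w : ℕ → Bool) : ℕ → Bool := fun n => if w n then x n else !(x n)

theorem psi_rd (z : ℕ → Bool) : psi (r A z) (d A z) = z := by
  funext n
  have hrn : r A z n = nb A n (pref A z n) (z n) := by
    show Function.update (pref A z n) n _ n = _
    rw [Function.update_self]
  by_cases hT : T A (n + 1) (Function.update (pref A z n) n (z n))
  · simp [psi, d, if_pos hT, hrn, nb]
  · simp [psi, d, if_neg hT, hrn, nb]

/-- Both one-bit extensions of `x`'s length-`n` prefix are in the tree. -/
def Br (x : ℕ → Bool) (n : ℕ) : Prop :=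
  T A (n + 1) (Function.update x n true) ∧ T A (n + 1) (Function.update x n false)

theorem Br_dep {x x' : ℕ → Bool} {n : ℕ} (h : ∀ k < n, x k = x' k) :
    Br A x n ↔ Br A x' n := by
  have key : ∀ (b : Bool) (y y' : ℕ → Bool), (∀ k < n, y k = y' k) →
      T A (n + 1) (Function.update y n b) → T A (n + 1) (Function.update y' n b) := by
    intro b y y' hy hT
    refine T_congr A (fun k hk => ?_) hT
    rcases Nat.lt_succ_iff_lt_or_eq.1 hk with hk' | rfl
    · rw [Function.update_of_ne (by omega), Function.update_of_ne (by omega)]; exact hy k hk'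
    · rw [Function.update_self, Function.update_self]
  exact ⟨fun hb => ⟨key true x x' h hb.1, key false x x' h hb.2⟩,
    fun hb => ⟨key true x' x (fun k hk => (h k hk).symm) hb.1,
      key false x' x (fun k hk => (h k hk).symm) hb.2⟩⟩

theorem d_true_of_Br {z : ℕ → Bool} {n : ℕ} (h : Br A (r A z) n) : d A z n = true := by
  have h1 : T A (n + 1) (Function.update (r A z) n (z n)) := by
    cases hzn : z n
    · rw [hzn] at *; exact h.2
    · rw [hzn] at *; exact h.1
  have h2 : T A (n + 1) (Function.update (pref A z n) n (z n)) := by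
    refine T_congr A (fun k hk => ?_) h1
    rcases Nat.lt_succ_iff_lt_or_eq.1 hk with hk' | rfl
    · rw [Function.update_of_ne (by omega), Function.update_of_ne (by omega)]
      exact (pref_lt A hk').symm
    · rw [Function.update_self, Function.update_self]
  rw [d, if_pos h2]

theorem rd_psi {x w : ℕ → Bool} (hx : x ∈ A) (hw : ∀ n, Br A x n → w n = true) :
    r A (psi x w) = x ∧ d A (psi x w) = w := by
  set z := psi x w with hz_def
  have key : ∀ n, r A z n = x n ∧ d A z n = w n := by
    intro n
    induction n using Nat.strong_induction_on with
    | _ n ih =>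
      have hpref : ∀ k < n, pref A z n k = x k :=
        fun k hk => (pref_lt A hk).trans (ih k hk).1
      have hrn : r A z n = nb A n (pref A z n) (z n) := by
        show Function.update (pref A z n) n _ n = _
        rw [Function.update_self]
      by_cases hwn : w n = true
      · have hz_n : z n = x n := by simp [hz_def, psi, hwn]
        have hT : T A (n + 1) (Function.update (pref A z n) n (z n)) := by
          refine ⟨x, hx, fun k hk => ?_⟩
          rcases Nat.lt_succ_iff_lt_or_eq.1 hk with hk' | rfl
          · rw [Function.update_of_ne (by omega)]; exact (hpref k hk').symm
          · rw [Function.update_self, hz_n]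
        constructor
        · rw [hrn, nb, if_pos hT, hz_n]
        · rw [d, if_pos hT, hwn]
      · have hwn' : w n = false := by revert hwn; cases w n <;> simp
        have hz_n : z n = !x n := by simp [hz_def, psi, hwn']
        have hxT : T A (n + 1) (Function.update x n (x n)) := by
          refine ⟨x, hx, fun k hk => ?_⟩
          rcases Nat.lt_succ_iff_lt_or_eq.1 hk with hk' | rfl
          · rw [Function.update_of_ne (by omega)]
          · rw [Function.update_self]
        have hnotBr : ¬ Br A x n := fun hBr => hwn (hw n hBr)
        have hT : ¬ T A (n + 1) (Function.update (pref A z n) n (z n)) := by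
          intro hT
          have hT' : T A (n + 1) (Function.update x n (!x n)) := by
            refine T_congr A (fun k hk => ?_) hT
            rcases Nat.lt_succ_iff_lt_or_eq.1 hk with hk' | rfl
            · rw [Function.update_of_ne (by omega), Function.update_of_ne (by omega)]
              exact hpref k hk'
            · rw [Function.update_self, Function.update_self, hz_n]
          refine hnotBr ?_
          cases hxn : x n
          · rw [hxn] at hT' hxT; exact ⟨hT', hxT⟩
          · rw [hxn] at hT' hxT; exact ⟨hxT, hT'⟩
        constructor
        · rw [hrn, nb, if_neg hT, hz_n, Bool.not_not]
        · rw [d, if_neg hT, hwn']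
  exact ⟨funext fun n => (key n).1, funext fun n => (key n).2⟩

theorem continuous_r : Continuous (r A) := by
  refine continuous_pi fun n => ?_
  exact continuous_of_finite_obs _ (n + 1) (fun i z => z i) (fun i => continuous_apply i)
    (fun a b hab => r_apply_dep A hab)

theorem continuous_d : Continuous (d A) := by
  refine continuous_pi fun n => ?_
  exact continuous_of_finite_obs _ (n + 1) (fun i z => z i) (fun i => continuous_apply i)
    (fun a b hab => d_apply_dep A hab)

/-! ### The set `E` and the first homeomorphism -/

/-- Pairs `(x, w)` where `x ∈ A` and `w` is forced `true` at branching positions. -/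
def E : Set ((ℕ → Bool) × (ℕ → Bool)) :=
  {p | p.1 ∈ A ∧ ∀ n, Br A p.1 n → p.2 n = true}

/-- The first equivalence: Cantor space is equivalent to `E A`. -/
def equivE (hcl : IsClosed A) (hne : A.Nonempty) : (ℕ → Bool) ≃ E A where
  toFun z := ⟨(r A z, d A z), r_mem A hcl hne z, fun n hBr => d_true_of_Br A hBr⟩
  invFun p := psi p.1.1 p.1.2
  left_inv z := psi_rd A z
  right_inv p := by
    obtain ⟨⟨x, w⟩, hx, hw⟩ := p
    have h := rd_psi A hx hw
    exact Subtype.ext (Prod.ext h.1 h.2)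

theorem continuous_equivE (hcl : IsClosed A) (hne : A.Nonempty) :
    Continuous (equivE A hcl hne) :=
  (((continuous_r A).prodMk (continuous_d A))).subtype_mk _

def homeoE (hcl : IsClosed A) (hne : A.Nonempty) : (ℕ → Bool) ≃ₜ E A :=
  (continuous_equivE A hcl hne).homeoOfEquivCompactToT2 (f := equivE A hcl hne)

end Stmt14

namespace Stmt14

attribute [local instance] Classical.propDecidable

/-! ### The padded set and the second homeomorphism -/

variable (C : Set (ℕ → Bool))

/-- `C` padded into the even coordinates, odd coordinates forced `false`. -/
def D : Set (ℕ → Bool) := {z | (fun n => z (2 * n)) ∈ C ∧ ∀ n, z (2 * n + 1) = false}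

/-- Embedding of `C` into `D`. -/
def emb (c : ℕ → Bool) : ℕ → Bool := fun m => if m % 2 = 0 then c (m / 2) else false

theorem emb_mem {c : ℕ → Bool} (hc : c ∈ C) : emb c ∈ D C := by
  constructor
  · have : (fun n => emb c (2 * n)) = c := by
      funext n
      simp only [emb]
      rw [if_pos (by omega)]
      congr 1
      omega
    rw [this]; exact hc
  · intro n
    simp only [emb]
    rw [if_neg (by omega)]

theorem D_closed (hC : IsClosed C) : IsClosed (D C) := by
  have h1 : IsClosed {z : ℕ → Bool | (fun n => z (2 * n)) ∈ C} :=
    hC.preimage (continuous_pi fun n => continuous_apply (2 * n))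
  have h2 : IsClosed {z : ℕ → Bool | ∀ n, z (2 * n + 1) = false} := by
    have : {z : ℕ → Bool | ∀ n, z (2 * n + 1) = false} =
        ⋂ n, {z : ℕ → Bool | z (2 * n + 1) = false} := by
      ext z; simp [Set.mem_iInter]
    rw [this]
    exact isClosed_iInter fun n => isClosed_eq (continuous_apply _) continuous_const
  exact h1.inter h2

theorem D_nonempty (hC : C.Nonempty) : (D C).Nonempty :=
  ⟨emb hC.choose, emb_mem C hC.choose_spec⟩

/-- Free positions of `x` (non-branching). -/
def S (x : ℕ → Bool) (m : ℕ) : Prop := ¬ Br (D C) x m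

theorem S_odd (x : ℕ → Bool) (n : ℕ) : S C x (2 * n + 1) := by
  rintro ⟨hT, -⟩
  obtain ⟨z, hz, hag⟩ := hT
  have h1 : z (2 * n + 1) = true := by
    have := hag (2 * n + 1) (by omega)
    rwa [Function.update_self] at this
  have h2 : z (2 * n + 1) = false := hz.2 n
  rw [h1] at h2
  exact Bool.noConfusion h2

theorem S_infinite (x : ℕ → Bool) : (setOf (S C x)).Infinite :=
  Set.infinite_of_injective_forall_mem (f := fun n : ℕ => 2 * n + 1)
    (fun a b hab => by change 2*a+1=2*b+1 at hab; omega) (fun n => S_odd C x n)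

theorem S_dep {x x' : ℕ → Bool} {m : ℕ} (h : ∀ k < m, x k = x' k) :
    S C x m ↔ S C x' m := not_congr (Br_dep (D C) h)

theorem count_congr {P Q : ℕ → Prop} [DecidablePred P] [DecidablePred Q] :
    ∀ {m : ℕ}, (∀ j < m, (P j ↔ Q j)) → Nat.count P m = Nat.count Q m := by
  intro m
  induction m with
  | zero => intro _; rfl
  | succ m ih =>
    intro h
    rw [Nat.count_succ, Nat.count_succ, ih (fun j hj => h j (by omega))]
    by_cases hP : P m
    · rw [if_pos hP, if_pos ((h m (by omega)).1 hP)]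
    · rw [if_neg hP, if_neg (fun hQ => hP ((h m (by omega)).2 hQ))]

theorem count_S_lt (x : ℕ → Bool) (k : ℕ) : k < Nat.count (S C x) (2 * k + 2) := by
  have hsub : (Finset.range (k + 1)).image (fun j => 2 * j + 1) ⊆
      Finset.filter (fun i => S C x i) (Finset.range (2 * k + 2)) := by
    intro i hi
    simp only [Finset.mem_image, Finset.mem_range] at hi
    obtain ⟨j, hj, rfl⟩ := hi
    simp only [Finset.mem_filter, Finset.mem_range]
    exact ⟨by omega, S_odd C x j⟩
  have hcard : k + 1 ≤ (Finset.filter (fun i => S C x i) (Finset.range (2 * k + 2))).card := by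
    calc k + 1 = ((Finset.range (k + 1)).image (fun j => 2 * j + 1)).card := by
          rw [Finset.card_image_of_injective _
            (fun a b hab => by change 2*a+1=2*b+1 at hab; omega), Finset.card_range]
      _ ≤ _ := Finset.card_le_card hsub
  rw [Nat.count_eq_card_filter_range]
  omega

theorem nth_S_lt (x : ℕ → Bool) (k : ℕ) : Nat.nth (S C x) k < 2 * k + 2 :=
  Nat.nth_lt_of_lt_count (count_S_lt C x k)

/-! ### The second equivalence -/

/-- The equivalence `↥C × 2^ω ≃ E (D C)`. -/
def equivCE (hC : C.Nonempty) : ↥C × (ℕ → Bool) ≃ E (D C) where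
  toFun q := ⟨(emb q.1, fun m => if S C (emb q.1) m
      then q.2 (Nat.count (S C (emb q.1)) m) else true),
    emb_mem C q.1.2, fun n hBr => if_neg (not_not_intro hBr)⟩
  invFun p := (⟨fun n => p.1.1 (2 * n), p.2.1.1⟩, fun k => p.1.2 (Nat.nth (S C p.1.1) k))
  left_inv q := by
    obtain ⟨⟨c, hc⟩, v⟩ := q
    refine Prod.ext (Subtype.ext ?_) ?_
    · funext n
      show emb c (2 * n) = c n
      simp only [emb]
      rw [if_pos (by omega)]
      congr 1
      omega
    · funext k
      show (if S C (emb c) (Nat.nth (S C (emb c)) k)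
          then v (Nat.count (S C (emb c)) (Nat.nth (S C (emb c)) k)) else true) = v k
      rw [if_pos (Nat.nth_mem_of_infinite (S_infinite C (emb c)) k),
        Nat.count_nth_of_infinite (S_infinite C (emb c)) k]
  right_inv p := by
    obtain ⟨⟨x, w⟩, hxD, hw⟩ := p
    have hx : emb (fun n => x (2 * n)) = x := by
      funext m
      simp only [emb]
      by_cases hm : m % 2 = 0
      · rw [if_pos hm]
        congr 1
        omega
      · rw [if_neg hm]
        have h2 : 2 * (m / 2) + 1 = m := by omega
        rw [← h2]
        exact (hxD.2 (m / 2)).symm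
    refine Subtype.ext (Prod.ext hx ?_)
    funext m
    show (if S C (emb fun n => x (2 * n)) m
        then w (Nat.nth (S C x) (Nat.count (S C (emb fun n => x (2 * n))) m)) else true) = w m
    rw [hx]
    by_cases hS : S C x m
    · rw [if_pos hS, Nat.nth_count hS]
    · rw [if_neg hS]
      exact (hw m (not_not.mp hS)).symm

theorem continuous_equivCE (hC : C.Nonempty) (hCcl : IsClosed C) :
    Continuous (equivCE C hC) := by
  have hx : Continuous (fun q : ↥C × (ℕ → Bool) => emb q.1.1) := by
    refine continuous_pi fun m => ?_
    by_cases hm : m % 2 = 0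
    · simp only [emb, if_pos hm]
      exact (continuous_apply (m / 2)).comp (continuous_subtype_val.comp continuous_fst)
    · simp only [emb, if_neg hm]
      exact continuous_const
  have hwcont : Continuous (fun q : ↥C × (ℕ → Bool) => fun m =>
      if S C (emb q.1.1) m then q.2 (Nat.count (S C (emb q.1.1)) m) else true) := by
    refine continuous_pi fun m => ?_
    refine continuous_of_finite_obs _ (2 * m + 2)
      (fun i q => if i % 2 = 0 then (q.1 : ℕ → Bool) (i / 2) else q.2 (i / 2)) ?_ ?_
    · intro i
      by_cases hi : i % 2 = 0
      · simp only [if_pos hi]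
        exact (continuous_apply (i / 2)).comp (continuous_subtype_val.comp continuous_fst)
      · simp only [if_neg hi]
        exact (continuous_apply (i / 2)).comp continuous_snd
    · intro a b hab
      have ha1 : ∀ j ≤ m, (a.1 : ℕ → Bool) j = (b.1 : ℕ → Bool) j := by
        intro j hj
        have h2 : (if (2 * j) % 2 = 0 then (a.1 : ℕ → Bool) ((2 * j) / 2)
              else a.2 ((2 * j) / 2)) =
            (if (2 * j) % 2 = 0 then (b.1 : ℕ → Bool) ((2 * j) / 2)
              else b.2 ((2 * j) / 2)) := hab (2 * j) (by omega)
        rw [if_pos (show (2 * j) % 2 = 0 by omega),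
          if_pos (show (2 * j) % 2 = 0 by omega),
          show (2 * j) / 2 = j by omega] at h2
        exact h2
      have ha2 : ∀ j ≤ m, a.2 j = b.2 j := by
        intro j hj
        have h2 : (if (2 * j + 1) % 2 = 0 then (a.1 : ℕ → Bool) ((2 * j + 1) / 2)
              else a.2 ((2 * j + 1) / 2)) =
            (if (2 * j + 1) % 2 = 0 then (b.1 : ℕ → Bool) ((2 * j + 1) / 2)
              else b.2 ((2 * j + 1) / 2)) := hab (2 * j + 1) (by omega)
        rw [if_neg (show ¬ (2 * j + 1) % 2 = 0 by omega),
          if_neg (show ¬ (2 * j + 1) % 2 = 0 by omega),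
          show (2 * j + 1) / 2 = j by omega] at h2
        exact h2
      have hemb : ∀ k < m + 1, emb a.1.1 k = emb b.1.1 k := by
        intro k hk
        simp only [emb]
        by_cases hkp : k % 2 = 0
        · rw [if_pos hkp, if_pos hkp, ha1 (k / 2) (by omega)]
        · rw [if_neg hkp, if_neg hkp]
      have hSiff : S C (emb a.1.1) m ↔ S C (emb b.1.1) m :=
        S_dep C (fun k hk => hemb k (by omega))
      have hcount : Nat.count (S C (emb a.1.1)) m = Nat.count (S C (emb b.1.1)) m :=
        count_congr (fun j hj => S_dep C (fun k hk => hemb k (by omega)))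
      by_cases hS : S C (emb a.1.1) m
      · rw [if_pos hS, if_pos (hSiff.1 hS), hcount,
          ha2 _ (Nat.count_le _)]
      · rw [if_neg hS, if_neg (fun h => hS (hSiff.2 h))]
  exact (hx.prodMk hwcont).subtype_mk _

/-- The key homeomorphism: for closed nonempty `C ⊆ 2^ω`, `↥C × 2^ω ≃ₜ 2^ω`. -/
def keyHomeo (hCcl : IsClosed C) (hC : C.Nonempty) : ↥C × (ℕ → Bool) ≃ₜ (ℕ → Bool) := by
  haveI : CompactSpace ↥C := isCompact_iff_compactSpace.mp hCcl.isCompact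
  exact ((continuous_equivCE C hC hCcl).homeoOfEquivCompactToT2
      (f := equivCE C hC)).trans (homeoE (D C) (D_closed C hCcl) (D_nonempty C hC)).symm

/-- The pairing homeomorphism `2^ω × 2^ω ≃ₜ 2^ω`. -/
def pairHomeo : (ℕ → Bool) × (ℕ → Bool) ≃ₜ (ℕ → Bool) :=
  (((Homeomorph.Set.univ (ℕ → Bool)).symm).prodCongr (Homeomorph.refl _)).trans
    (keyHomeo Set.univ isClosed_univ ⟨fun _ => false, trivial⟩)

end Stmt14

end Stmt14Aux

/-- If the Cantor space 2^ω can be partitioned into κ nonempty closed sets, then it can be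
partitioned into κ pairwise disjoint subsets each homeomorphic to 2^ω. -/
theorem stmt_14 (I : Type*) (K : I → Set (ℕ → Bool))
    (hdisj : Pairwise (Function.onFun Disjoint K)) (hne : ∀ i, (K i).Nonempty)
    (hcl : ∀ i, IsClosed (K i)) (hcov : (⋃ i, K i) = Set.univ) :
    ∃ P : I → Set (ℕ → Bool), Pairwise (Function.onFun Disjoint P) ∧
      (⋃ i, P i) = Set.univ ∧ ∀ i, Nonempty (P i ≃ₜ (ℕ → Bool)) := by
  classical
  set J := Stmt14.pairHomeo with hJ
  refine ⟨fun i => J '' (K i ×ˢ Set.univ), ?_, ?_, ?_⟩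
  · intro i j hij
    refine Set.disjoint_left.2 ?_
    rintro z ⟨⟨a, b⟩, hab, rfl⟩ ⟨⟨a', b'⟩, hab', heq⟩
    have : (a', b') = (a, b) := J.injective heq
    rw [this] at hab'
    exact Set.disjoint_left.1 (hdisj hij) hab.1 hab'.1
  · rw [← Set.image_iUnion, ← Set.iUnion_prod_const, hcov, Set.univ_prod_univ, Set.image_univ,
      J.surjective.range_eq]
  · intro i
    refine ⟨((J.image (K i ×ˢ Set.univ)).symm.trans
      ((Homeomorph.Set.prod (K i) Set.univ).trans ?_))⟩
    exact ((Homeomorph.refl _).prodCongr (Homeomorph.Set.univ _)).trans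
      (Stmt14.keyHomeo (K i) (hcl i) (hne i))
end

section
/- If 2^ω is partitioned into uncountably many nonempty closed sets, then there is a nonempty closed perfect subset C of 2^ω (hence homeomorphic to 2^ω) such that the partition restricts to a partition of C of the same uncountable cardinality in which every piece is closed and nowhere dense in C. -/
/-- If 2^ω is partitioned into uncountably many nonempty closed sets, there is a nonempty
closed perfect C ⊆ 2^ω such that the partition restricts to a partition of C of the same
cardinality, all of whose pieces are nowhere dense in C. -/
theorem stmt_17 (I : Type*) [Uncountable I] (K : I → Set (ℕ → Bool))
    (hdisj : Pairwise (Function.onFun Disjoint K)) (hne : ∀ i, (K i).Nonempty)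
    (hcl : ∀ i, IsClosed (K i)) (hcov : (⋃ i, K i) = Set.univ) :
    ∃ C : Set (ℕ → Bool), C.Nonempty ∧ IsClosed C ∧ Perfect C ∧
      Cardinal.mk {i : I | (K i ∩ C).Nonempty} = Cardinal.mk I ∧
      ∀ i : I, IsNowhereDense ((fun x : C => (x : ℕ → Bool)) ⁻¹' K i) := by
  classical
  set Bad : Set (ℕ → Bool) :=
    {x | ∃ U : Set (ℕ → Bool), IsOpen U ∧ x ∈ U ∧ {i | (K i ∩ U).Nonempty}.Countable}
    with hBadDef
  -- Bad is open
  have hBopen : IsOpen Bad := by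
    rw [isOpen_iff_forall_mem_open]
    rintro x ⟨U, hU, hxU, hc⟩
    exact ⟨U, fun y hy => ⟨U, hU, hy, hc⟩, hU, hxU⟩
  -- choice of witnesses
  have hBadCount : {i | (K i ∩ Bad).Nonempty}.Countable := by
    choose Ux hUo hUm hUc using fun x : Bad => x.2
    obtain ⟨T, hTc, hTU⟩ := TopologicalSpace.isOpen_iUnion_countable Ux hUo
    have hBsub : Bad ⊆ ⋃ x ∈ T, Ux x := by
      intro y hy
      rw [hTU]
      exact Set.mem_iUnion.2 ⟨⟨y, hy⟩, hUm ⟨y, hy⟩⟩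
    have : {i | (K i ∩ Bad).Nonempty} ⊆ ⋃ x ∈ T, {i | (K i ∩ Ux x).Nonempty} := by
      rintro i ⟨y, hyK, hyB⟩
      obtain ⟨x, hxT, hyU⟩ := Set.mem_iUnion₂.1 (hBsub hyB)
      exact Set.mem_biUnion hxT ⟨y, hyK, hyU⟩
    exact Set.Countable.mono this (hTc.biUnion fun x _ => hUc x)
  set C : Set (ℕ → Bool) := Badᶜ with hCdef
  have hCcl : IsClosed C := hBopen.isClosed_compl
  -- pieces missing C are countably many
  have hmiss : {i : I | ¬(K i ∩ C).Nonempty} ⊆ {i | (K i ∩ Bad).Nonempty} := by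
    intro i hi
    obtain ⟨y, hy⟩ := hne i
    refine ⟨y, hy, ?_⟩
    by_contra hyB
    exact hi ⟨y, hy, hyB⟩
  have hmissC : {i : I | ¬(K i ∩ C).Nonempty}.Countable := hBadCount.mono hmiss
  -- cardinality
  have hcard : Cardinal.mk {i : I | (K i ∩ C).Nonempty} = Cardinal.mk I := by
    have h1 : Cardinal.mk {i : I | (K i ∩ C).Nonempty} +
        Cardinal.mk ({i : I | (K i ∩ C).Nonempty}ᶜ : Set I) = Cardinal.mk I :=
      Cardinal.mk_sum_compl _
    have h2 : Cardinal.mk ({i : I | (K i ∩ C).Nonempty}ᶜ : Set I) ≤ Cardinal.aleph0 := by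
      rw [Cardinal.le_aleph0_iff_set_countable]
      exact hmissC
    have hIu : Cardinal.aleph0 < Cardinal.mk I := Cardinal.aleph0_lt_mk
    have h3 : Cardinal.aleph0 ≤ Cardinal.mk {i : I | (K i ∩ C).Nonempty} := by
      by_contra h
      push_neg at h
      have : Cardinal.mk I ≤ Cardinal.aleph0 := by
        calc Cardinal.mk I ≤ Cardinal.mk {i : I | (K i ∩ C).Nonempty} + Cardinal.aleph0 := by
              rw [← h1]; exact add_le_add_right h2 _
          _ ≤ Cardinal.aleph0 + Cardinal.aleph0 := add_le_add_left h.le _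
          _ = Cardinal.aleph0 := Cardinal.aleph0_add_aleph0
      exact absurd this (not_le.2 hIu)
    refine le_antisymm (Cardinal.mk_set_le _) ?_
    calc Cardinal.mk I = _ := h1.symm
      _ ≤ Cardinal.mk {i : I | (K i ∩ C).Nonempty} + Cardinal.aleph0 := add_le_add_right h2 _
      _ = Cardinal.mk {i : I | (K i ∩ C).Nonempty} := Cardinal.add_eq_left h3 h3
  -- C is nonempty
  have hCne : C.Nonempty := by
    have hne0 : Cardinal.mk {i : I | (K i ∩ C).Nonempty} ≠ 0 := by
      rw [hcard]
      exact Cardinal.mk_ne_zero I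
    rw [Cardinal.mk_ne_zero_iff] at hne0
    obtain ⟨⟨i, hi⟩⟩ := hne0
    obtain ⟨y, _, hyC⟩ := hi
    exact ⟨y, hyC⟩
  -- key: a point of C has no open neighborhood meeting only countably many pieces
  have hkey : ∀ x ∈ C, ∀ W : Set (ℕ → Bool), IsOpen W → x ∈ W →
      ¬ {i | (K i ∩ W).Nonempty}.Countable := by
    intro x hx W hWo hxW hc
    exact hx ⟨W, hWo, hxW, hc⟩
  -- perfect
  have hPerf : Perfect C := by
    refine ⟨hCcl, fun x hx => ?_⟩
    rw [accPt_iff_nhds]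
    intro U hU
    by_contra hcon
    push_neg at hcon
    obtain ⟨V, hVU, hVo, hxV⟩ := mem_nhds_iff.1 hU
    have hsub : {i | (K i ∩ V).Nonempty} ⊆ {i | (K i ∩ Bad).Nonempty} ∪ {i | x ∈ K i} := by
      rintro i ⟨y, hyK, hyV⟩
      by_cases hyB : y ∈ Bad
      · exact Or.inl ⟨y, hyK, hyB⟩
      · have hyC : y ∈ C := hyB
        have : y = x := by
          by_contra hne'
          exact hne' (hcon y ⟨hVU hyV, hyC⟩)
        exact Or.inr (this ▸ hyK)
    have hcnt : ({i | x ∈ K i} : Set I).Countable := by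
      apply Set.Subsingleton.countable
      intro i hi j hj
      by_contra hij
      exact Set.disjoint_left.1 (hdisj hij) hi hj
    have : {i | (K i ∩ V).Nonempty}.Countable :=
      Set.Countable.mono hsub (hBadCount.union hcnt)
    exact hkey x hx V hVo hxV this
  -- nowhere dense
  refine ⟨C, hCne, hCcl, hPerf, hcard, fun i => ?_⟩
  have hclosed : IsClosed ((fun x : C => (x : ℕ → Bool)) ⁻¹' K i) :=
    (hcl i).preimage continuous_subtype_val
  rw [hclosed.isNowhereDense_iff]
  by_contra hint
  obtain ⟨x, hx⟩ := Set.nonempty_iff_ne_empty.2 hint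
  have hmem : (fun x : C => (x : ℕ → Bool)) ⁻¹' K i ∈ nhds x := mem_interior_iff_mem_nhds.1 hx
  rw [nhds_subtype, Filter.mem_comap] at hmem
  obtain ⟨W, hWnhds, hWsub⟩ := hmem
  obtain ⟨V, hVW, hVo, hxV⟩ := mem_nhds_iff.1 hWnhds
  have hsub : {j | (K j ∩ V).Nonempty} ⊆ insert i {j | (K j ∩ Bad).Nonempty} := by
    rintro j ⟨y, hyK, hyV⟩
    by_cases hyB : y ∈ Bad
    · exact Set.mem_insert_iff.2 (Or.inr ⟨y, hyK, hyB⟩)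
    · have hyC : y ∈ C := hyB
      have hyKi : y ∈ K i := hWsub (show (⟨y, hyC⟩ : C).1 ∈ W from hVW hyV)
      left
      by_contra hij
      exact Set.disjoint_left.1 (hdisj hij) hyK hyKi
  have : {j | (K j ∩ V).Nonempty}.Countable :=
    Set.Countable.mono hsub (hBadCount.insert i)
  exact hkey x.1 x.2 V hVo hxV this
end

section
/- If S and T are trees with |T| < |S| and S is perfect, then there is no continuous bijection from [T] onto [S]. -/
universe u

/-- A (pruned, nonempty, downward-closed) tree of finite sequences. -/
def IsTree {α : Type u} (T : Set (List α)) : Prop :=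
  T.Nonempty ∧ (∀ s t : List α, s <+: t → t ∈ T → s ∈ T) ∧
    ∀ s ∈ T, ∃ a : α, s ++ [a] ∈ T

/-- A perfect tree: every node has two incomparable proper extensions in the tree. -/
def IsPerfectTree {α : Type u} (S : Set (List α)) : Prop :=
  ∀ s ∈ S, ∃ t₁ ∈ S, ∃ t₂ ∈ S, s <+: t₁ ∧ s <+: t₂ ∧ s ≠ t₁ ∧ s ≠ t₂ ∧
    ¬t₁ <+: t₂ ∧ ¬t₂ <+: t₁

/-- The end space (set of branches) of a tree of finite sequences. -/
def branches {α : Type u} (T : Set (List α)) : Set (ℕ → α) :=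
  {x | ∀ n : ℕ, (List.ofFn fun i : Fin n => x i) ∈ T}

lemma getD_eq_of_prefix {γ : Type*} {l₁ l₂ : List γ} (h : l₁ <+: l₂) {i : ℕ}
    (hi : i < l₁.length) (d : γ) : l₁.getD i d = l₂.getD i d := by
  rw [List.getD_eq_getElem _ _ hi, List.getD_eq_getElem _ _ (hi.trans_le h.length_le)]
  exact h.getElem hi

/-- Through every node of a pruned tree there is a branch. -/
lemma exists_branch_thru {α : Type u} {T : Set (List α)} (hT : IsTree T) (a₀ : α)
    {t : List α} (ht : t ∈ T) :
    ∃ x ∈ branches T, ∀ i < t.length, x i = t.getD i a₀ := by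
  classical
  choose ext hext using hT.2.2
  -- chain of extensions
  let g : ℕ → {s : List α // s ∈ T} := fun n =>
    Nat.rec ⟨t, ht⟩ (fun _ p => ⟨p.1 ++ [ext p.1 p.2], hext p.1 p.2⟩) n
  have hlen : ∀ n, (g n).1.length = t.length + n := by
    intro n; induction n with
    | zero => rfl
    | succ n ih => simp [g, List.length_append, ih]; omega
  have hpref : ∀ m n, m ≤ n → (g m).1 <+: (g n).1 := by
    intro m n hmn
    induction n with
    | zero => simp_all
    | succ n ih =>
      rcases Nat.lt_or_ge m (n+1) with h | h
      · exact (ih (Nat.lt_succ_iff.mp h)).trans ⟨[ext (g n).1 (g n).2], rfl⟩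
      · have : m = n+1 := le_antisymm hmn h
        subst this; exact List.prefix_rfl
  refine ⟨fun i => (g (i+1)).1.getD i a₀, ?_, ?_⟩
  · intro n
    have key : (List.ofFn fun i : Fin n => (g (i+1)).1.getD i a₀) = (g n).1.take n := by
      apply List.ext_getElem
      · simp [hlen n]
      · intro i h₁ h₂
        have hin : i < n := by simpa using h₁
        have hi1 : i < (g (i+1)).1.length := by rw [hlen (i+1)]; omega
        rw [List.getElem_ofFn, List.getElem_take]
        have hin' : i < (g n).1.length := hi1.trans_le (hpref (i+1) n hin).length_le
        show (g (i+1)).1.getD i a₀ = (g n).1[i]'hin'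
        rw [getD_eq_of_prefix (hpref (i+1) n hin) hi1 a₀,
          List.getD_eq_getElem _ _ hin']
    rw [key]
    exact hT.2.1 _ _ (List.take_prefix _ _) (g n).2
  · intro i hi
    have h0 : (g 0).1 = t := rfl
    have := getD_eq_of_prefix (hpref 0 (i+1) (Nat.zero_le _)) (l₂ := (g (i+1)).1) (i := i)
      (by simpa [h0] using hi) a₀
    simpa [h0] using this.symm

lemma tree_infinite {α : Type u} {T : Set (List α)} (hT : IsTree T) : Infinite T := by
  classical
  obtain ⟨t, ht⟩ := hT.1
  choose ext hext using hT.2.2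
  let g : ℕ → {s : List α // s ∈ T} := fun n =>
    Nat.rec ⟨t, ht⟩ (fun _ p => ⟨p.1 ++ [ext p.1 p.2], hext p.1 p.2⟩) n
  have hlen : ∀ n, (g n).1.length = t.length + n := by
    intro n; induction n with
    | zero => rfl
    | succ n ih => simp [g, List.length_append, ih]; omega
  exact Infinite.of_injective g (fun m n hmn => by
    have := congrArg (fun p => p.1.length) hmn
    simp only [hlen] at this; omega)

/-- If `|T| < |S|` and `S` is perfect, there is no continuous bijection from `[T]`
onto `[S]`. -/
theorem stmt_19 {α β : Type u} [TopologicalSpace α] [DiscreteTopology α]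
    [TopologicalSpace β] [DiscreteTopology β]
    (T : Set (List α)) (S : Set (List β)) (hT : IsTree T) (hS : IsTree S)
    (hperf : IsPerfectTree S) (hcard : Cardinal.mk T < Cardinal.mk S) :
    ¬ ∃ f : branches T → branches S, Continuous f ∧ Function.Bijective f := by
  classical
  rintro ⟨f, hfc, hfb⟩
  obtain ⟨t₀, ht₀⟩ := hT.1
  obtain ⟨a₀, -⟩ := hT.2.2 t₀ ht₀
  obtain ⟨s₀, hs₀⟩ := hS.1
  obtain ⟨b₀, -⟩ := hS.2.2 s₀ hs₀
  -- choose a branch through each node of T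
  choose xb hxb hxb' using fun (t : T) => exists_branch_thru hT a₀ t.2
  -- key claim: every basic open set of [S] contains the image of a chosen branch
  have key : ∀ s : S, ∃ t : T,
      ∀ i < s.1.length, ((f ⟨xb t, hxb t⟩ : branches S) : ℕ → β) i = s.1.getD i b₀ := by
    intro s
    set V : Set (branches S) :=
      {y | ∀ i < s.1.length, (y : ℕ → β) i = s.1.getD i b₀} with hV
    have hVopen : IsOpen V := by
      have hVeq : V = Subtype.val ⁻¹'
          (⋂ i ∈ Finset.range s.1.length, {z : ℕ → β | z i = s.1.getD i b₀}) := by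
        ext y
        simp [hV, Set.mem_iInter]
      rw [hVeq]
      refine IsOpen.preimage continuous_subtype_val ?_
      refine isOpen_biInter_finset fun i _ => ?_
      show IsOpen ((fun z : ℕ → β => z i) ⁻¹' {s.1.getD i b₀})
      exact (isOpen_discrete _).preimage (continuous_apply i)
    -- V is nonempty in the range of f
    obtain ⟨ys, hys, hys'⟩ := exists_branch_thru hS b₀ s.2
    obtain ⟨p, hp⟩ := hfb.2 ⟨ys, hys⟩
    have hpV : p ∈ f ⁻¹' V := by
      show f p ∈ V
      rw [hp]
      intro i hi
      exact hys' i hi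
    -- the preimage is open in the induced topology
    obtain ⟨W, hWopen, hWpre⟩ := isOpen_induced_iff.mp (hVopen.preimage hfc)
    have hpW : (p : ℕ → α) ∈ W := by
      rw [← hWpre] at hpV
      exact hpV
    obtain ⟨I, u, hu, hsub⟩ := (isOpen_pi_iff.mp hWopen) p hpW
    set n : ℕ := I.sup id + 1 with hn
    set t : List α := List.ofFn (fun i : Fin n => (p : ℕ → α) i) with htdef
    have ht : t ∈ T := p.2 n
    have htlen : t.length = n := by simp [htdef, hn]
    refine ⟨⟨t, ht⟩, ?_⟩
    have hmem : xb ⟨t, ht⟩ ∈ (I : Set ℕ).pi u := by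
      intro i hi
      have hin : i < n := by
        have : i ≤ I.sup id := Finset.le_sup (f := id) hi
        omega
      have e1 : xb ⟨t, ht⟩ i = t.getD i a₀ := hxb' ⟨t, ht⟩ i (htlen ▸ hin)
      have e2 : t.getD i a₀ = (p : ℕ → α) i := by
        rw [List.getD_eq_getElem _ _ (htlen ▸ hin)]
        exact List.getElem_ofFn _
      rw [e1, e2]
      exact (hu i hi).2
    have hxW : xb ⟨t, ht⟩ ∈ W := hsub hmem
    have : (⟨xb ⟨t, ht⟩, hxb ⟨t, ht⟩⟩ : branches T) ∈ f ⁻¹' V := by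
      rw [← hWpre]
      exact hxW
    exact this
  choose Φ hΦ using key
  -- injection from S into ULift ℕ × T
  have Finj : Function.Injective
      (fun s : S => ((⟨s.1.length⟩ : ULift.{u} ℕ), Φ s)) := by
    intro s s' h
    have hlen : s.1.length = s'.1.length := congrArg ULift.down (congrArg Prod.fst h)
    have hΦe : Φ s = Φ s' := congrArg Prod.snd h
    apply Subtype.ext
    apply List.ext_getElem hlen
    intro i h1 h2
    have e1 := hΦ s i h1
    have e2 := hΦ s' i h2
    rw [hΦe] at e1
    have e3 : s.1.getD i b₀ = s'.1.getD i b₀ := e1.symm.trans e2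
    rwa [List.getD_eq_getElem _ _ h1, List.getD_eq_getElem _ _ h2] at e3
  have hinf : Infinite T := tree_infinite hT
  have h1 : Cardinal.mk S ≤ Cardinal.mk (ULift.{u} ℕ × T) :=
    Cardinal.mk_le_of_injective Finj
  have h2 : Cardinal.mk (ULift.{u} ℕ × ↥T) = Cardinal.mk T := by
    rw [Cardinal.mk_prod, Cardinal.mk_uLift, Cardinal.mk_nat, Cardinal.lift_aleph0,
      Cardinal.lift_id, Cardinal.lift_id,
      Cardinal.mul_eq_max le_rfl (Cardinal.aleph0_le_mk T)]
    exact max_eq_right (Cardinal.aleph0_le_mk T)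
  exact absurd (h1.trans_eq h2) (not_le.mpr hcard)
end
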